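/- arXiv:2003.08779 — 5 statements merged into one kernel-verified Lean document; each statement's English description precedes it below -/
import Mathlib

section
/- Every α-minimal connected graph G has at most 2·α(G) − 1 vertices. -/
/-- A set of vertices is independent: pairwise nonadjacent. -/
def IndepSet {V : Type*} (G : SimpleGraph V) (s : Set V) : Prop :=
  s.Pairwise fun u v => ¬ G.Adj u v

/-- The independence number of a graph: the maximum size of an independent set. -/
noncomputable def indepNum {V : Type*} (G : SimpleGraph V) : ℕ :=
  sSup {n | ∃ t : Finset V, IndepSet G ↑t ∧ t.card = n}

/-- An edge-colored graph is properly connected if between every pair of distinct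
vertices there is a path in which no two consecutive edges have the same color. -/
def ProperlyConnected {V : Type*} (G : SimpleGraph V) (c : Sym2 V → ℕ) : Prop :=
  ∀ u v : V, u ≠ v → ∃ p : G.Walk u v, p.IsPath ∧ (p.edges.map c).Chain' (· ≠ ·)

/-- The optimal proper connection number of a monochromatic graph `G` (all edges
initially colored `1`): the minimum of `p + q` over all final colorings `c` making
`G` properly connected, where `p` is the number of recolored edges (edges whose
color is no longer `1`) and `q` is the number of distinct new colors used. -/
noncomputable def pcOpt {V : Type*} (G : SimpleGraph V) : ℕ :=
  sInf {n | ∃ c : Sym2 V → ℕ, ProperlyConnected G c ∧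
    n = {e | e ∈ G.edgeSet ∧ c e ≠ 1}.ncard
      + (c '' {e | e ∈ G.edgeSet ∧ c e ≠ 1}).ncard}

/-- The degree of a vertex. -/
noncomputable def vdeg {V : Type*} (G : SimpleGraph V) (v : V) : ℕ :=
  (G.neighborSet v).ncard

/-- The maximum degree of a graph. -/
noncomputable def maxDeg {V : Type*} (G : SimpleGraph V) : ℕ :=
  sSup {n | ∃ v, vdeg G v = n}

/-- A connected graph is α-minimal if every vertex is either a cut-vertex or its
deletion decreases the independence number. -/
def AlphaMinimal {V : Type*} (G : SimpleGraph V) : Prop :=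
  G.Connected ∧ ∀ v : V,
    ¬ (G.induce ({v}ᶜ : Set V)).Connected ∨
      indepNum (G.induce ({v}ᶜ : Set V)) < indepNum G

namespace AMinProof

attribute [local instance] Classical.propDecidable

open Finset

variable {V : Type*} (G : SimpleGraph V)

/-- independence predicate on finsets -/
def indepOn (M : Finset V) : Prop := ∀ a ∈ M, ∀ b ∈ M, a ≠ b → ¬ G.Adj a b

noncomputable def alphaF (s : Finset V) : ℕ :=
  ((s.powerset).filter (fun t => indepOn G t)).sup Finset.card

variable {G}

lemma indepOn_empty : indepOn G ∅ := by intro a ha; simp at ha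

lemma indepOn_singleton (a : V) : indepOn G {a} := by
  intro x hx y hy hxy
  simp only [Finset.mem_singleton] at hx hy
  subst hx; subst hy; exact absurd rfl hxy

lemma indepOn_mono {M N : Finset V} (h : M ⊆ N) (hN : indepOn G N) : indepOn G M :=
  fun a ha b hb hab => hN a (h ha) b (h hb) hab

lemma card_le_alphaF {M s : Finset V} (h1 : M ⊆ s) (h2 : indepOn G M) :
    M.card ≤ alphaF G s :=
  Finset.le_sup (Finset.mem_filter.2 ⟨Finset.mem_powerset.2 h1, h2⟩)

lemma alphaF_le_card (s : Finset V) : alphaF G s ≤ s.card := by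
  apply Finset.sup_le
  intro t ht
  exact Finset.card_le_card (Finset.mem_powerset.1 (Finset.mem_filter.1 ht).1)

lemma exists_maxOn (s : Finset V) : ∃ M, M ⊆ s ∧ indepOn G M ∧ M.card = alphaF G s := by
  obtain ⟨t, ht, hts⟩ := Finset.exists_mem_eq_sup ((s.powerset).filter (fun t => indepOn G t))
    ⟨∅, Finset.mem_filter.2 ⟨Finset.mem_powerset.2 (Finset.empty_subset s), indepOn_empty⟩⟩
    Finset.card
  exact ⟨t, Finset.mem_powerset.1 (Finset.mem_filter.1 ht).1, (Finset.mem_filter.1 ht).2, hts.symm⟩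

lemma alphaF_mono {s s' : Finset V} (h : s ⊆ s') : alphaF G s ≤ alphaF G s' := by
  obtain ⟨M, hM1, hM2, hM3⟩ := exists_maxOn (G := G) s
  exact hM3 ▸ card_le_alphaF (hM1.trans h) hM2

lemma one_le_alphaF {s : Finset V} (h : s.Nonempty) : 1 ≤ alphaF G s := by
  obtain ⟨a, ha⟩ := h
  have := card_le_alphaF (G := G) (M := {a}) (by simpa using ha) (indepOn_singleton a)
  simpa using this

lemma alphaF_singleton (a : V) : alphaF G {a} = 1 :=
  le_antisymm (by simpa using alphaF_le_card (G := G) {a}) (one_le_alphaF ⟨a, by simp⟩)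

/-! ### Reachability within a finset -/

variable (G)

def Reach (s : Finset V) (a b : V) : Prop :=
  ∃ p : G.Walk a b, ∀ x ∈ p.support, x ∈ s

variable {G}

lemma Reach.left_mem {s : Finset V} {a b : V} (h : Reach G s a b) : a ∈ s := by
  obtain ⟨p, hp⟩ := h; exact hp a p.start_mem_support

lemma Reach.right_mem {s : Finset V} {a b : V} (h : Reach G s a b) : b ∈ s := by
  obtain ⟨p, hp⟩ := h; exact hp b p.end_mem_support

lemma Reach.refl {s : Finset V} {a : V} (ha : a ∈ s) : Reach G s a a :=
  ⟨SimpleGraph.Walk.nil, by simp [ha]⟩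

lemma Reach.symm {s : Finset V} {a b : V} (h : Reach G s a b) : Reach G s b a := by
  obtain ⟨p, hp⟩ := h
  exact ⟨p.reverse, fun x hx => hp x (by rwa [SimpleGraph.Walk.support_reverse, List.mem_reverse] at hx)⟩

lemma Reach.trans {s : Finset V} {a b c : V} (h1 : Reach G s a b) (h2 : Reach G s b c) :
    Reach G s a c := by
  obtain ⟨p, hp⟩ := h1; obtain ⟨q, hq⟩ := h2
  refine ⟨p.append q, fun x hx => ?_⟩
  rcases (SimpleGraph.Walk.mem_support_append_iff p q).1 hx with h | h
  · exact hp x h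
  · exact hq x h

lemma Reach.adj {s : Finset V} {a b : V} (ha : a ∈ s) (hb : b ∈ s) (h : G.Adj a b) :
    Reach G s a b :=
  ⟨SimpleGraph.Walk.cons h SimpleGraph.Walk.nil, by
    intro x hx
    simp only [SimpleGraph.Walk.support_cons, SimpleGraph.Walk.support_nil, List.mem_cons,
      List.mem_singleton, List.not_mem_nil, or_false] at hx
    rcases hx with rfl | rfl
    · exact ha
    · exact hb⟩

lemma Reach.mono {s s' : Finset V} {a b : V} (h : s ⊆ s') (hr : Reach G s a b) :
    Reach G s' a b := by
  obtain ⟨p, hp⟩ := hr; exact ⟨p, fun x hx => h (hp x hx)⟩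

variable (G) in
/-- connectedness of an induced sub-finset -/
def Conn (s : Finset V) : Prop := s.Nonempty ∧ ∀ a ∈ s, ∀ b ∈ s, Reach G s a b

variable (G) in
/-- connected component of `a` inside `s` -/
noncomputable def compo (s : Finset V) (a : V) : Finset V := s.filter (Reach G s a)

lemma mem_compo {s : Finset V} {a b : V} : b ∈ compo G s a ↔ b ∈ s ∧ Reach G s a b := by
  simp [compo]

lemma compo_subset {s : Finset V} {a : V} : compo G s a ⊆ s := Finset.filter_subset _ _

lemma self_mem_compo {s : Finset V} {a : V} (ha : a ∈ s) : a ∈ compo G s a :=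
  mem_compo.2 ⟨ha, Reach.refl ha⟩

lemma compo_closed {s : Finset V} {a b c : V} (hb : b ∈ compo G s a) (hc : c ∈ s)
    (h : G.Adj b c) : c ∈ compo G s a := by
  obtain ⟨hbs, hr⟩ := mem_compo.1 hb
  exact mem_compo.2 ⟨hc, hr.trans (Reach.adj hbs hc h)⟩

lemma compo_congr {s : Finset V} {a c : V} (h : Reach G s a c) :
    compo G s c = compo G s a := by
  ext b
  simp only [mem_compo]
  exact ⟨fun ⟨hb, hr⟩ => ⟨hb, h.trans hr⟩, fun ⟨hb, hr⟩ => ⟨hb, h.symm.trans hr⟩⟩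

lemma compo_eq_of_mem {s : Finset V} {a b : V} (hb : b ∈ compo G s a) :
    compo G s b = compo G s a :=
  compo_congr (mem_compo.1 hb).2

lemma walk_support_in_compo {s : Finset V} :
    ∀ {a b : V} (p : G.Walk a b), (∀ x ∈ p.support, x ∈ s) → ∀ x ∈ p.support, x ∈ compo G s a := by
  intro a b p
  induction p with
  | nil =>
    intro hp x hx
    simp only [SimpleGraph.Walk.support_nil, List.mem_singleton] at hx
    subst hx
    exact self_mem_compo (hp _ (by simp))
  | @cons a c b h q ih =>
    intro hp x hx
    have hqs : ∀ y ∈ q.support, y ∈ s := fun y hy => hp y (by simp [SimpleGraph.Walk.support_cons, hy])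
    have ha : a ∈ s := hp a (by simp [SimpleGraph.Walk.support_cons])
    have hc : c ∈ s := hp c (by simp [SimpleGraph.Walk.support_cons, q.start_mem_support])
    rw [SimpleGraph.Walk.support_cons] at hx
    rcases List.mem_cons.1 hx with rfl | hx
    · exact self_mem_compo ha
    · have := ih hqs x hx
      rwa [compo_congr (Reach.adj ha hc h)] at this

lemma reach_compo {s : Finset V} {a b : V} (h : Reach G s a b) :
    Reach G (compo G s a) a b := by
  obtain ⟨p, hp⟩ := h
  exact ⟨p, walk_support_in_compo p hp⟩

lemma conn_compo {s : Finset V} {a : V} (ha : a ∈ s) : Conn G (compo G s a) := by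
  refine ⟨⟨a, self_mem_compo ha⟩, fun x hx y hy => ?_⟩
  have hax : Reach G (compo G s a) a x := reach_compo (mem_compo.1 hx).2
  have hay : Reach G (compo G s a) a y := reach_compo (mem_compo.1 hy).2
  exact hax.symm.trans hay

lemma exists_cross_aux {s A : Finset V} :
    ∀ {y u : V} (p : G.Walk y u), u ∉ A → (∀ x ∈ p.support, x ∈ s) → y ∈ A →
      ∃ x₁ x₂, x₁ ∈ A ∧ x₂ ∈ s ∧ x₂ ∉ A ∧ G.Adj x₁ x₂ := by
  intro y u p
  induction p with
  | nil => intro hu _ hy; exact absurd hy hu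
  | @cons y' c u' h q ih =>
    intro hu hp hy
    by_cases hc : c ∈ A
    · exact ih hu (fun x hx => hp x (by simp [SimpleGraph.Walk.support_cons, hx])) hc
    · exact ⟨y', c, hy, hp c (by simp [SimpleGraph.Walk.support_cons, q.start_mem_support]), hc, h⟩

lemma exists_cross {s A : Finset V} {u : V} (hu : u ∉ A) {y : V} (p : G.Walk y u)
    (hp : ∀ x ∈ p.support, x ∈ s) (hy : y ∈ A) :
    ∃ x₁ x₂, x₁ ∈ A ∧ x₂ ∈ s ∧ x₂ ∉ A ∧ G.Adj x₁ x₂ :=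
  exists_cross_aux p hu hp hy

/-- every component of `s.erase u` has a vertex adjacent to `u` -/
lemma exists_adj_of_compo {s : Finset V} {u y : V} (hconn : Conn G s) (hu : u ∈ s)
    (hy : y ∈ s.erase u) : ∃ x ∈ compo G (s.erase u) y, G.Adj u x := by
  have hys : y ∈ s := Finset.mem_of_mem_erase hy
  obtain ⟨p, hp⟩ := hconn.2 y hys u hu
  have huA : u ∉ compo G (s.erase u) y := fun h => by
    have := compo_subset h; simp at this
  obtain ⟨x₁, x₂, hx₁, hx₂s, hx₂, hadj⟩ := exists_cross huA p hp (self_mem_compo hy)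
  by_cases hx2u : x₂ = u
  · exact ⟨x₁, hx₁, hx2u ▸ hadj.symm⟩
  · exact absurd (compo_closed hx₁ (Finset.mem_erase.2 ⟨hx2u, hx₂s⟩) hadj) hx₂

lemma reach_ne_exists_adj {s : Finset V} {a b : V} (h : Reach G s a b) (hab : a ≠ b) :
    ∃ x ∈ s, ∃ y ∈ s, G.Adj x y := by
  obtain ⟨p, hp⟩ := h
  cases p with
  | nil => exact absurd rfl hab
  | @cons a c b hadj q =>
    exact ⟨a, hp a (by simp [SimpleGraph.Walk.support_cons]),
      c, hp c (by simp [SimpleGraph.Walk.support_cons, q.start_mem_support]), hadj⟩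

/-! ### separation additivity -/

lemma indepOn_union {A B : Finset V} (hA : indepOn G A) (hB : indepOn G B)
    (hsep : ∀ a ∈ A, ∀ b ∈ B, ¬ G.Adj a b) : indepOn G (A ∪ B) := by
  intro a ha b hb hab hadj
  rcases Finset.mem_union.1 ha with ha' | ha' <;> rcases Finset.mem_union.1 hb with hb' | hb'
  · exact hA a ha' b hb' hab hadj
  · exact hsep a ha' b hb' hadj
  · exact hsep b hb' a ha' hadj.symm
  · exact hB a ha' b hb' hab hadj

lemma alphaF_union_sep {A B : Finset V} (hdisj : Disjoint A B)
    (hsep : ∀ a ∈ A, ∀ b ∈ B, ¬ G.Adj a b) :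
    alphaF G (A ∪ B) = alphaF G A + alphaF G B := by
  classical
  apply le_antisymm
  · obtain ⟨M, hM1, hM2, hM3⟩ := exists_maxOn (G := G) (A ∪ B)
    rw [← hM3]
    have : M = (M ∩ A) ∪ (M ∩ B) := by
      rw [← Finset.inter_union_distrib_left]
      exact (Finset.inter_eq_left.2 hM1).symm
    have hle : M.card ≤ (M ∩ A).card + (M ∩ B).card := by
      conv_lhs => rw [this]
      exact Finset.card_union_le _ _
    calc M.card ≤ (M ∩ A).card + (M ∩ B).card := hle
      _ ≤ alphaF G A + alphaF G B := by
          gcongr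
          · exact card_le_alphaF Finset.inter_subset_right (indepOn_mono Finset.inter_subset_left hM2)
          · exact card_le_alphaF Finset.inter_subset_right (indepOn_mono Finset.inter_subset_left hM2)
  · obtain ⟨MA, hA1, hA2, hA3⟩ := exists_maxOn (G := G) A
    obtain ⟨MB, hB1, hB2, hB3⟩ := exists_maxOn (G := G) B
    rw [← hA3, ← hB3, ← Finset.card_union_of_disjoint (hdisj.mono hA1 hB1)]
    exact card_le_alphaF (Finset.union_subset_union hA1 hB1)
      (indepOn_union hA2 hB2 (fun a ha b hb => hsep a (hA1 ha) b (hB1 hb)))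

/-! ### maximum independent sets, hypothesis predicate -/

variable (G) in
def MaxOn (s M : Finset V) : Prop := M ⊆ s ∧ indepOn G M ∧ M.card = alphaF G s

variable (G) in
def Hyp (s Z : Finset V) : Prop :=
  ∀ w ∈ s, w ∉ Z → Conn G (s.erase w) → ∀ M, MaxOn G s M → w ∈ M

lemma MaxOn.exists (s : Finset V) : ∃ M, MaxOn G s M := by
  obtain ⟨M, h1, h2, h3⟩ := exists_maxOn (G := G) s
  exact ⟨M, h1, h2, h3⟩

/-! ### components of a set-difference -/

lemma compo_sdiff_eq {t : Finset V} {a₀ a : V} (ha : a ∈ t \ compo G t a₀) :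
    compo G (t \ compo G t a₀) a = compo G t a := by
  have hat : a ∈ t := (Finset.mem_sdiff.1 ha).1
  have hanc : a ∉ compo G t a₀ := (Finset.mem_sdiff.1 ha).2
  apply Finset.Subset.antisymm
  · intro x hx
    obtain ⟨hx1, hx2⟩ := mem_compo.1 hx
    exact mem_compo.2 ⟨(Finset.mem_sdiff.1 hx1).1, hx2.mono (Finset.sdiff_subset)⟩
  · intro x hx
    obtain ⟨hx1, hx2⟩ := mem_compo.1 hx
    obtain ⟨p, hp⟩ := hx2
    have hsup : ∀ y ∈ p.support, y ∈ compo G t a := walk_support_in_compo p hp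
    have hsub : ∀ y ∈ p.support, y ∈ t \ compo G t a₀ := by
      intro y hy
      refine Finset.mem_sdiff.2 ⟨hp y hy, fun hyc => ?_⟩
      have : compo G t y = compo G t a₀ := compo_eq_of_mem hyc
      have hya : compo G t y = compo G t a := compo_eq_of_mem (hsup y hy)
      apply hanc
      rw [← this, hya]
      exact self_mem_compo hat
    exact mem_compo.2 ⟨hsub x p.end_mem_support, ⟨p, hsub⟩⟩

lemma compo_sep {t : Finset V} {a : V} {x y : V} (hx : x ∈ compo G t a) (hy : y ∈ t)
    (hyc : y ∉ compo G t a) : ¬ G.Adj x y := fun hadj => hyc (compo_closed hx hy hadj)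

/-- summation over components -/
lemma LS1 : ∀ (n : ℕ) (t Z : Finset V), t.card ≤ n → t.Nonempty →
    (∀ a ∈ t, (compo G t a).card + 1 ≤ 2 * alphaF G (compo G t a) + (Z ∩ compo G t a).card) →
    t.card + 1 ≤ 2 * alphaF G t + (Z ∩ t).card := by
  intro n
  induction n with
  | zero =>
    intro t Z hcard hne _
    obtain ⟨a, ha⟩ := hne
    simp [Finset.card_eq_zero.1 (Nat.le_zero.1 hcard)] at ha
  | succ n ih =>
    intro t Z hcard hne hcomp
    classical
    obtain ⟨a₀, ha₀⟩ := hne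
    set D := compo G t a₀ with hD
    by_cases hrest : t \ D = ∅
    · have htD : t = D := by
        apply Finset.Subset.antisymm
        · intro x hx
          by_contra hxD
          exact absurd (Finset.mem_sdiff.2 ⟨hx, hxD⟩) (by simp [hrest])
        · exact compo_subset
      have := hcomp a₀ ha₀
      rwa [← hD, ← htD] at this
    · obtain ⟨b, hb⟩ := Finset.nonempty_of_ne_empty hrest
      set rest := t \ D with hrestdef
      have hDsub : D ⊆ t := compo_subset
      have hDne : D.Nonempty := ⟨a₀, self_mem_compo ha₀⟩
      have hcard_rest : rest.card < t.card := by
        have h1 : rest.card + D.card = t.card := by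
          rw [hrestdef]
          exact Finset.card_sdiff_add_card_eq_card hDsub
        have h2 : 0 < D.card := Finset.card_pos.2 hDne
        omega
      have hrest_bound : rest.card + 1 ≤ 2 * alphaF G rest + (Z ∩ rest).card := by
        apply ih rest Z (by omega) ⟨b, hb⟩
        intro a ha
        rw [compo_sdiff_eq ha]
        exact hcomp a (Finset.mem_sdiff.1 ha).1
      have hD_bound := hcomp a₀ ha₀
      rw [← hD] at hD_bound
      have hsep : ∀ x ∈ D, ∀ y ∈ rest, ¬ G.Adj x y := by
        intro x hx y hy
        exact compo_sep hx (Finset.mem_sdiff.1 hy).1 (Finset.mem_sdiff.1 hy).2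
      have hdisj : Disjoint D rest := Finset.disjoint_sdiff
      have halpha : alphaF G t = alphaF G D + alphaF G rest := by
        have : D ∪ rest = t := by
          rw [hrestdef]
          exact Finset.union_sdiff_of_subset hDsub
        rw [← this]
        exact alphaF_union_sep hdisj hsep
      have hcards : D.card + rest.card = t.card := by
        have := Finset.card_sdiff_add_card_eq_card hDsub
        rw [hrestdef]
        omega
      have hZ : (Z ∩ D).card + (Z ∩ rest).card = (Z ∩ t).card := by
        have hdisj2 : Disjoint (Z ∩ D) (Z ∩ rest) :=
          hdisj.mono Finset.inter_subset_right Finset.inter_subset_right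
        rw [← Finset.card_union_of_disjoint hdisj2, ← Finset.inter_union_distrib_left,
          Finset.union_sdiff_of_subset hDsub]
      omega

/-! ### minimal branches -/

variable (G) in
def IsPair (s X : Finset V) (u a : V) : Prop :=
  u ∈ s ∧ a ∈ s.erase u ∧ compo G (s.erase u) a ≠ s.erase u ∧ (compo G (s.erase u) a) ∩ X = ∅

lemma minimal_pair {s X : Finset V} (hconn : Conn G s)
    (hex : ∃ u a, IsPair G s X u a) :
    ∃ u a, IsPair G s X u a ∧ ∀ x ∈ compo G (s.erase u) a, Conn G (s.erase x) := by
  classical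
  set PF : Finset (V × V) := (s ×ˢ s).filter (fun q => IsPair G s X q.1 q.2) with hPF
  have hne : PF.Nonempty := by
    obtain ⟨u, a, hp⟩ := hex
    refine ⟨(u, a), ?_⟩
    simp only [hPF, Finset.mem_filter, Finset.mem_product]
    exact ⟨⟨hp.1, Finset.mem_of_mem_erase hp.2.1⟩, hp⟩
  obtain ⟨q, hq, hmin⟩ := Finset.exists_min_image PF (fun q => (compo G (s.erase q.1) q.2).card) hne
  obtain ⟨u, a⟩ := q
  have hpair : IsPair G s X u a := (Finset.mem_filter.1 hq).2
  refine ⟨u, a, hpair, ?_⟩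
  set C := compo G (s.erase u) a with hC
  intro x hxC
  by_contra hnc
  have hxs : x ∈ s := Finset.mem_of_mem_erase (compo_subset hxC)
  have hxu : x ≠ u := (Finset.mem_erase.1 (compo_subset hxC)).1
  have hus : u ∈ s := hpair.1
  have huex : u ∈ s.erase x := Finset.mem_erase.2 ⟨Ne.symm hxu, hus⟩
  have hclaim : ∀ y ∈ s.erase x, y ∉ C → Reach G (s.erase x) y u := by
    intro y hy hyC
    obtain ⟨hyx, hys⟩ := Finset.mem_erase.1 hy
    by_cases hyu : y = u
    · subst hyu; exact Reach.refl hy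
    · have hyeu : y ∈ s.erase u := Finset.mem_erase.2 ⟨hyu, hys⟩
      set D := compo G (s.erase u) y with hD
      have hDdisj : ∀ w, w ∈ D → w ∉ C := by
        intro w hw hwC
        have h1 : compo G (s.erase u) w = D := compo_eq_of_mem hw
        have h2 : compo G (s.erase u) w = C := compo_eq_of_mem hwC
        apply hyC
        have heq : compo G (s.erase u) a = compo G (s.erase u) y := by
          rw [← hC, ← h2, h1, hD]
        show y ∈ compo G (s.erase u) a
        rw [heq]
        exact self_mem_compo hyeu
      obtain ⟨x', hx', hadj⟩ := exists_adj_of_compo hconn hus hyeu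
      have hDsub : D ⊆ s.erase x := by
        intro w hw
        refine Finset.mem_erase.2 ⟨?_, Finset.mem_of_mem_erase (compo_subset hw)⟩
        intro hwx
        exact hDdisj w hw (hwx ▸ hxC)
      have hr1 : Reach G (s.erase x) y x' :=
        ((conn_compo hyeu).2 y (self_mem_compo hyeu) x' hx').mono hDsub
      exact hr1.trans (Reach.adj (hDsub hx') huex hadj.symm)
  have hb : ∃ b ∈ s.erase x, ¬ Reach G (s.erase x) b u := by
    by_contra hall
    push_neg at hall
    exact hnc ⟨⟨u, huex⟩, fun y hy y' hy' => (hall y hy).trans (hall y' hy').symm⟩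
  obtain ⟨b, hbex, hbnr⟩ := hb
  have hbC : b ∈ C := by
    by_contra hbC
    exact hbnr (hclaim b hbex hbC)
  set D := compo G (s.erase x) b with hD2
  have hDC : ∀ w ∈ D, w ∈ C ∧ w ≠ x := by
    intro w hw
    obtain ⟨hw1, hw2⟩ := mem_compo.1 hw
    refine ⟨?_, (Finset.mem_erase.1 hw1).1⟩
    by_contra hwC
    exact hbnr (hw2.trans (hclaim w hw1 hwC))
  have hDsubC : D ⊆ C.erase x := fun w hw => Finset.mem_erase.2 ⟨(hDC w hw).2, (hDC w hw).1⟩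
  have hDprop : compo G (s.erase x) b ≠ s.erase x := by
    intro heq
    have : u ∈ D := by rw [hD2, heq]; exact huex
    exact hbnr (mem_compo.1 this).2
  have hDX : compo G (s.erase x) b ∩ X = ∅ := by
    rw [Finset.eq_empty_iff_forall_notMem]
    intro w hw
    obtain ⟨hw1, hw2⟩ := Finset.mem_inter.1 hw
    have : w ∈ C ∩ X := Finset.mem_inter.2 ⟨(hDC w (hD2 ▸ hw1)).1, hw2⟩
    rw [hpair.2.2.2] at this
    simp at this
  have hmem : (x, b) ∈ PF := by
    simp only [hPF, Finset.mem_filter, Finset.mem_product]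
    exact ⟨⟨hxs, Finset.mem_of_mem_erase hbex⟩, hxs, hbex, hDprop, hDX⟩
  have hminxb := hmin (x, b) hmem
  simp only at hminxb
  have hcards : D.card < C.card := by
    have h1 : D.card ≤ (C.erase x).card := Finset.card_le_card hDsubC
    have h2 : (C.erase x).card = C.card - 1 := Finset.card_erase_of_mem hxC
    have h3 : 0 < C.card := Finset.card_pos.2 ⟨x, hxC⟩
    omega
  rw [← hD2] at hminxb
  omega

/-! ### the pendant route -/

lemma pendant_route (s Z : Finset V)
    (IH : ∀ s' Z' : Finset V, s'.card < s.card → Conn G s' → Hyp G s' Z' →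
      s'.card + 1 ≤ 2 * alphaF G s' + (Z'.card - 1))
    (hconn : Conn G s) (hhyp : Hyp G s Z)
    {u v : V} (hu : u ∈ s) (hv : v ∈ s.erase u)
    (hC : compo G (s.erase u) v = {v})
    (hproper : compo G (s.erase u) v ≠ s.erase u)
    (hvmax : ∀ M, MaxOn G s M → v ∈ M) :
    s.card + 1 ≤ 2 * alphaF G s + (Z.card - 1) := by
  classical
  have hvu : v ≠ u := (Finset.mem_erase.1 hv).1
  have hvs : v ∈ s := Finset.mem_of_mem_erase hv
  have hNv : ∀ y ∈ s, G.Adj v y → y = u := by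
    intro y hy hadj
    by_contra hne
    have hy' : y ∈ s.erase u := Finset.mem_erase.2 ⟨hne, hy⟩
    have hmemc : y ∈ compo G (s.erase u) v := compo_closed (self_mem_compo hv) hy' hadj
    rw [hC] at hmemc
    simp only [Finset.mem_singleton] at hmemc
    subst hmemc
    exact G.irrefl hadj
  have hAdjuv : G.Adj u v := by
    obtain ⟨x, hx, hadj⟩ := exists_adj_of_compo hconn hu hv
    rw [hC] at hx
    simp only [Finset.mem_singleton] at hx
    subst hx; exact hadj
  have hu_nomax : ∀ M, MaxOn G s M → u ∉ M := by
    intro M hM hmem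
    exact hM.2.1 u hmem v (hvmax M hM) (Ne.symm hvu) hAdjuv
  set t := (s.erase u).erase v with ht
  have htsub : t ⊆ s := (Finset.erase_subset _ _).trans (Finset.erase_subset _ _)
  have hut : u ∉ t := by simp [ht]
  have hvt : v ∉ t := by simp [ht]
  obtain ⟨M₀, hM₀⟩ := MaxOn.exists (G := G) s
  have huM₀ : u ∉ M₀ := hu_nomax M₀ hM₀
  have hvM₀ : v ∈ M₀ := hvmax M₀ hM₀
  have hM₀sub : M₀ ⊆ s.erase u := fun x hx => Finset.mem_erase.2 ⟨fun h => huM₀ (h ▸ hx), hM₀.1 hx⟩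
  have h1 : alphaF G (s.erase u) = alphaF G s := le_antisymm (alphaF_mono (Finset.erase_subset _ _))
    (hM₀.2.2 ▸ card_le_alphaF hM₀sub hM₀.2.1)
  have hdecomp : insert v t = s.erase u := Finset.insert_erase hv
  have hsep1 : ∀ a ∈ ({v} : Finset V), ∀ b ∈ t, ¬ G.Adj a b := by
    intro a ha b hb
    simp only [Finset.mem_singleton] at ha
    subst ha
    intro hadj
    have hbu := hNv b (htsub hb) hadj
    exact hut (hbu ▸ hb)
  have hdisj1 : Disjoint ({v} : Finset V) t := by simp [hvt]
  have halpha_t : alphaF G s = alphaF G t + 1 := by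
    rw [← h1, ← hdecomp, Finset.insert_eq, alphaF_union_sep hdisj1 hsep1, alphaF_singleton]
    omega
  have hcard_t : t.card + 2 = s.card := by
    have h2 : (s.erase u).card = s.card - 1 := Finset.card_erase_of_mem hu
    have h3 : t.card = (s.erase u).card - 1 := Finset.card_erase_of_mem hv
    have h4 : 1 ≤ s.card := Finset.card_pos.2 ⟨u, hu⟩
    have h5 : 1 ≤ (s.erase u).card := Finset.card_pos.2 ⟨v, hv⟩
    omega
  have htne : t.Nonempty := by
    have hss : compo G (s.erase u) v ⊂ s.erase u := (compo_subset).ssubset_of_ne hproper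
    obtain ⟨b, hb1, hb2⟩ := Finset.exists_of_ssubset hss
    rw [hC] at hb2
    simp only [Finset.mem_singleton] at hb2
    exact ⟨b, Finset.mem_erase.2 ⟨hb2, hb1⟩⟩
  have hedge : ∀ a ∈ t, ∀ x ∈ compo G t a, ∀ y ∈ s, G.Adj x y → y ∉ compo G t a → y = u := by
    intro a ha x hx y hy hadj hyc
    by_contra hyu
    by_cases hyv : y = v
    · subst hyv
      have hxu : x = u := hNv x (htsub (compo_subset hx)) hadj.symm
      exact hut (hxu ▸ compo_subset hx)
    · have hyt : y ∈ t := Finset.mem_erase.2 ⟨hyv, Finset.mem_erase.2 ⟨hyu, hy⟩⟩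
      exact hyc (compo_closed hx hyt hadj)
  have hattach : ∀ a ∈ t, ∃ x ∈ compo G t a, G.Adj u x := by
    intro a ha
    obtain ⟨p, hp⟩ := hconn.2 a (htsub ha) u hu
    have huc : u ∉ compo G t a := fun h => hut (compo_subset h)
    obtain ⟨x₁, x₂, hx₁, hx₂s, hx₂, hadj⟩ := exists_cross huc p hp (self_mem_compo ha)
    have hx2u : x₂ = u := hedge a ha x₁ hx₁ x₂ hx₂s hadj hx₂
    exact ⟨x₁, hx₁, hx2u ▸ hadj.symm⟩
  have hext : ∀ a ∈ t, ∀ N, N ⊆ compo G t a → indepOn G N → N.card = alphaF G (compo G t a) →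
      MaxOn G s ((M₀ \ compo G t a) ∪ N) := by
    intro a ha N hN1 hN2 hN3
    have hDt : compo G t a ⊆ t := compo_subset
    have hsub : (M₀ \ compo G t a) ∪ N ⊆ s :=
      Finset.union_subset ((Finset.sdiff_subset).trans hM₀.1) (hN1.trans (hDt.trans htsub))
    have hind : indepOn G ((M₀ \ compo G t a) ∪ N) := by
      rw [Finset.union_comm]
      apply indepOn_union hN2 (indepOn_mono Finset.sdiff_subset hM₀.2.1)
      intro q hq p hp hadj
      obtain ⟨hpM, hpD⟩ := Finset.mem_sdiff.1 hp
      have hpu : p = u := hedge a ha q (hN1 hq) p (hM₀.1 hpM) hadj hpD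
      exact huM₀ (hpu ▸ hpM)
    have hdisj : Disjoint (M₀ \ compo G t a) N := by
      apply Finset.disjoint_left.2
      intro p hp hpN
      exact (Finset.mem_sdiff.1 hp).2 (hN1 hpN)
    have hMD : (M₀ ∩ compo G t a).card ≤ alphaF G (compo G t a) :=
      card_le_alphaF Finset.inter_subset_right (indepOn_mono Finset.inter_subset_left hM₀.2.1)
    have hMsplit : (M₀ \ compo G t a).card + (M₀ ∩ compo G t a).card = M₀.card :=
      Finset.card_sdiff_add_card_inter M₀ (compo G t a)
    have hcardu : ((M₀ \ compo G t a) ∪ N).card = (M₀ \ compo G t a).card + N.card :=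
      Finset.card_union_of_disjoint hdisj
    have hM₀c := hM₀.2.2
    have hle := card_le_alphaF hsub hind
    exact ⟨hsub, hind, by omega⟩
  have hLa : ∀ a ∈ t, ∀ w ∈ compo G t a, w ∉ Z →
      Conn G ((compo G t a).erase w) → (∃ x ∈ compo G t a, G.Adj u x ∧ x ≠ w) →
      ∀ N, MaxOn G (compo G t a) N → w ∈ N := by
    intro a ha w hw hwZ hwconn hexx N hN
    obtain ⟨x, hx, hadjux, hxw⟩ := hexx
    have hws : w ∈ s := htsub (compo_subset hw)
    have hwu : w ≠ u := fun h => hut (h ▸ compo_subset hw)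
    have hwv : w ≠ v := fun h => hvt (h ▸ compo_subset hw)
    have huw : u ∈ s.erase w := Finset.mem_erase.2 ⟨Ne.symm hwu, hu⟩
    have hkey : ∀ y ∈ s.erase w, Reach G (s.erase w) y u := by
      intro y hy
      obtain ⟨hyw, hys⟩ := Finset.mem_erase.1 hy
      by_cases hyu : y = u
      · subst hyu; exact Reach.refl hy
      by_cases hyv : y = v
      · subst hyv; exact Reach.adj hy huw hAdjuv.symm
      have hyt : y ∈ t := Finset.mem_erase.2 ⟨hyv, Finset.mem_erase.2 ⟨hyu, hys⟩⟩
      by_cases hyD : y ∈ compo G t a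
      · have hxew : x ∈ (compo G t a).erase w := Finset.mem_erase.2 ⟨hxw, hx⟩
        have hyew : y ∈ (compo G t a).erase w := Finset.mem_erase.2 ⟨hyw, hyD⟩
        have hDsub : (compo G t a).erase w ⊆ s.erase w := by
          intro p hp
          exact Finset.mem_erase.2 ⟨(Finset.mem_erase.1 hp).1,
            htsub (compo_subset (Finset.mem_erase.1 hp).2)⟩
        have hr := (hwconn.2 y hyew x hxew).mono hDsub
        exact hr.trans (Reach.adj (hDsub hxew) huw hadjux.symm)
      · obtain ⟨x', hx', hadj'⟩ := hattach y hyt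
        have hDsub' : compo G t y ⊆ s.erase w := by
          intro p hp
          refine Finset.mem_erase.2 ⟨?_, htsub (compo_subset hp)⟩
          intro hpw
          subst hpw
          have h1 : compo G t p = compo G t y := compo_eq_of_mem hp
          have h2 : compo G t p = compo G t a := compo_eq_of_mem hw
          apply hyD
          rw [← h2, h1]
          exact self_mem_compo hyt
        have hr := ((conn_compo hyt).2 y (self_mem_compo hyt) x' hx').mono hDsub'
        exact hr.trans (Reach.adj (hDsub' hx') huw hadj'.symm)
    have hconnw : Conn G (s.erase w) :=
      ⟨⟨u, huw⟩, fun y hy y' hy' => (hkey y hy).trans (hkey y' hy').symm⟩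
    have hwall : ∀ M, MaxOn G s M → w ∈ M := hhyp w hws hwZ hconnw
    have hNmax : MaxOn G s ((M₀ \ compo G t a) ∪ N) := hext a ha N hN.1 hN.2.1 hN.2.2
    have hwmem := hwall _ hNmax
    rcases Finset.mem_union.1 hwmem with h | h
    · exact absurd hw (Finset.mem_sdiff.1 h).2
    · exact h
  have hflag_card : ∀ a ∈ t,
      ((compo G t a).filter (fun w => ∀ x ∈ compo G t a, G.Adj u x → x = w)).card ≤ 1 := by
    intro a ha
    rw [Finset.card_le_one]
    intro w1 h1 w2 h2
    obtain ⟨x, hx, hadj⟩ := hattach a ha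
    have e1 := (Finset.mem_filter.1 h1).2 x hx hadj
    have e2 := (Finset.mem_filter.1 h2).2 x hx hadj
    rw [← e1, ← e2]
  have hHD : ∀ a ∈ t, Hyp G (compo G t a)
      ((Z ∩ compo G t a) ∪ ((compo G t a).filter (fun w => ∀ x ∈ compo G t a, G.Adj u x → x = w))) := by
    intro a ha w hwD hwZ hwconn N hN
    rw [Finset.mem_union, not_or] at hwZ
    obtain ⟨hwZ1, hwZ2⟩ := hwZ
    have hwZ' : w ∉ Z := fun h => hwZ1 (Finset.mem_inter.2 ⟨h, hwD⟩)
    have hexx : ∃ x ∈ compo G t a, G.Adj u x ∧ x ≠ w := by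
      by_contra hnex
      push_neg at hnex
      exact hwZ2 (Finset.mem_filter.2 ⟨hwD, hnex⟩)
    exact hLa a ha w hwD hwZ' hwconn hexx N hN
  obtain ⟨a₀, ha₀⟩ := htne
  by_cases hJ : compo G t a₀ = t
  · -- single component case
    have hHyp_t : Hyp G t (Z ∩ t) := by
      intro w hwt hwZ hwconn N hN
      have hwZ' : w ∉ Z := fun h => hwZ (Finset.mem_inter.2 ⟨h, hwt⟩)
      by_cases hexx : ∃ x ∈ t, G.Adj u x ∧ x ≠ w
      · obtain ⟨x, hx, hh1, hh2⟩ := hexx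
        have hwt' : w ∈ compo G t a₀ := by rw [hJ]; exact hwt
        have hconn' : Conn G ((compo G t a₀).erase w) := by rw [hJ]; exact hwconn
        have hN' : MaxOn G (compo G t a₀) N := by rw [hJ]; exact hN
        have hx' : x ∈ compo G t a₀ := by rw [hJ]; exact hx
        exact hLa a₀ ha₀ w hwt' hwZ' hconn' ⟨x, hx', hh1, hh2⟩ N hN'
      · push_neg at hexx
        by_contra hwN
        have hNs : N ⊆ s := hN.1.trans htsub
        have huN : u ∉ N := fun h => hut (hN.1 h)
        have hind : indepOn G (insert u N) := by
          intro p hp q hq hpq hadj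
          rcases Finset.mem_insert.1 hp with rfl | hp' <;> rcases Finset.mem_insert.1 hq with rfl | hq'
          · exact hpq rfl
          · exact hwN ((hexx q (hN.1 hq') hadj) ▸ hq')
          · exact hwN ((hexx p (hN.1 hp') hadj.symm) ▸ hp')
          · exact hN.2.1 p hp' q hq' hpq hadj
        have hcard : (insert u N).card = alphaF G s := by
          rw [Finset.card_insert_of_notMem huN, hN.2.2, halpha_t]
        exact hu_nomax _ ⟨Finset.insert_subset hu hNs, hind, hcard⟩ (Finset.mem_insert_self u N)
    have hconnt : Conn G t := by rw [← hJ]; exact conn_compo ha₀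
    have hIHt := IH t (Z ∩ t) (by omega) hconnt hHyp_t
    have hZle : (Z ∩ t).card ≤ Z.card := Finset.card_le_card Finset.inter_subset_left
    omega
  · -- several components
    have hrest_ne : (t \ compo G t a₀).Nonempty := by
      rw [Finset.sdiff_nonempty]
      intro hsub
      exact hJ (Finset.Subset.antisymm compo_subset hsub)
    have hcb : ∀ a ∈ t, (compo G t a).card + 1 ≤
        2 * alphaF G (compo G t a) + (Z ∩ compo G t a).card := by
      intro a ha
      have h2 := Finset.card_le_card (compo_subset (G := G) (s := t) (a := a))
      have hIHa := IH (compo G t a) _ (by omega) (conn_compo ha) (hHD a ha)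
      have hZDcard : ((Z ∩ compo G t a) ∪
          ((compo G t a).filter (fun w => ∀ x ∈ compo G t a, G.Adj u x → x = w))).card ≤
          (Z ∩ compo G t a).card + 1 := by
        calc ((Z ∩ compo G t a) ∪ _).card ≤ (Z ∩ compo G t a).card + _ := Finset.card_union_le _ _
          _ ≤ (Z ∩ compo G t a).card + 1 := by
              have := hflag_card a ha
              omega
      omega
    have hrest_b : (t \ compo G t a₀).card + 1 ≤
        2 * alphaF G (t \ compo G t a₀) + (Z ∩ (t \ compo G t a₀)).card := by
      apply LS1 (t \ compo G t a₀).card _ _ le_rfl hrest_ne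
      intro a ha
      rw [compo_sdiff_eq ha]
      exact hcb a (Finset.mem_sdiff.1 ha).1
    have hD₀b := hcb a₀ ha₀
    -- additivity
    have hDsub : compo G t a₀ ⊆ t := compo_subset
    have hsep : ∀ x ∈ compo G t a₀, ∀ y ∈ t \ compo G t a₀, ¬ G.Adj x y := by
      intro x hx y hy
      exact compo_sep hx (Finset.mem_sdiff.1 hy).1 (Finset.mem_sdiff.1 hy).2
    have hdisj : Disjoint (compo G t a₀) (t \ compo G t a₀) := Finset.disjoint_sdiff
    have halpha : alphaF G t = alphaF G (compo G t a₀) + alphaF G (t \ compo G t a₀) := by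
      have hun : compo G t a₀ ∪ (t \ compo G t a₀) = t := Finset.union_sdiff_of_subset hDsub
      conv_lhs => rw [← hun]
      exact alphaF_union_sep hdisj hsep
    have hcards : (t \ compo G t a₀).card + (compo G t a₀).card = t.card :=
      Finset.card_sdiff_add_card_eq_card hDsub
    have hZsplit : (Z ∩ compo G t a₀).card + (Z ∩ (t \ compo G t a₀)).card = (Z ∩ t).card := by
      have hdisj2 : Disjoint (Z ∩ compo G t a₀) (Z ∩ (t \ compo G t a₀)) :=
        hdisj.mono Finset.inter_subset_right Finset.inter_subset_right
      rw [← Finset.card_union_of_disjoint hdisj2, ← Finset.inter_union_distrib_left,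
        Finset.union_sdiff_of_subset hDsub]
    have hZle : (Z ∩ t).card ≤ Z.card := Finset.card_le_card Finset.inter_subset_left
    omega

/-! ### the main induction -/

theorem mainT : ∀ (n : ℕ) (s Z : Finset V), s.card ≤ n → Conn G s → Hyp G s Z →
    s.card + 1 ≤ 2 * alphaF G s + (Z.card - 1) := by
  intro n
  induction n with
  | zero =>
    intro s Z hc hconn _
    obtain ⟨a, ha⟩ := hconn.1
    rw [Finset.card_eq_zero.1 (Nat.le_zero.1 hc)] at ha
    simp at ha
  | succ n IH =>
    intro s Z hcard hconn hhyp
    have hsne := hconn.1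
    have hs1 : 1 ≤ s.card := Finset.card_pos.2 hsne
    have halpha1 : 1 ≤ alphaF G s := one_le_alphaF hsne
    by_cases hstriv : s.card ≤ 1
    · omega
    by_cases hA : ∀ w ∈ s, Conn G (s.erase w)
    · -- case A : no cut vertices
      obtain ⟨M₀, hM₀⟩ := MaxOn.exists (G := G) s
      have hsub : s \ Z ⊆ M₀ := by
        intro w hw
        obtain ⟨hws, hwZ⟩ := Finset.mem_sdiff.1 hw
        exact hhyp w hws hwZ (hA w hws) M₀ hM₀
      have hq : (s \ Z).card ≤ alphaF G s := hM₀.2.2 ▸ Finset.card_le_card hsub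
      have hscard : s.card ≤ (s \ Z).card + Z.card := by
        have h1 : (s \ Z).card + (s ∩ Z).card = s.card := Finset.card_sdiff_add_card_inter s Z
        have h2 : (s ∩ Z).card ≤ Z.card := Finset.card_le_card Finset.inter_subset_right
        omega
      by_cases hq0 : (s \ Z).card = 0
      · omega
      · obtain ⟨w, hw⟩ := Finset.card_pos.1 (Nat.pos_of_ne_zero hq0)
        have halpha2 : 2 ≤ alphaF G s := by
          by_contra hlt
          have ha1 : alphaF G s = 1 := by omega
          obtain ⟨y, hy, hwy⟩ : ∃ y ∈ s, y ≠ w := by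
            obtain ⟨y, hy, y', hy', hne⟩ := Finset.one_lt_card.1 (by omega : 1 < s.card)
            by_cases h : y = w
            · exact ⟨y', hy', fun hh => hne (h.trans hh.symm)⟩
            · exact ⟨y, hy, h⟩
          have hsing : MaxOn G s {y} :=
            ⟨Finset.singleton_subset_iff.2 hy, indepOn_singleton y, by simp [ha1]⟩
          have hmem := hhyp w ((Finset.mem_sdiff.1 hw).1) ((Finset.mem_sdiff.1 hw).2)
            (hA w (Finset.mem_sdiff.1 hw).1) {y} hsing
          simp only [Finset.mem_singleton] at hmem
          exact hwy hmem.symm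
        omega
    · -- case B : a cut vertex exists
      push_neg at hA
      obtain ⟨u₀, hu₀s, hu₀⟩ := hA
      have herane : (s.erase u₀).Nonempty := by
        rw [← Finset.card_pos, Finset.card_erase_of_mem hu₀s]
        omega
      have hpair0 : ∃ u a, IsPair G s (∅ : Finset V) u a := by
        have hu₀' := hu₀
        rw [Conn, not_and] at hu₀'
        have h2 := hu₀' herane
        push_neg at h2
        obtain ⟨y, hy, y', hy', hnr⟩ := h2
        refine ⟨u₀, y, hu₀s, hy, ?_, by simp⟩
        intro heq
        apply hnr
        have hmm : y' ∈ compo G (s.erase u₀) y := by rw [heq]; exact hy'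
        exact (mem_compo.1 hmm).2
      obtain ⟨u, a, hpair, hnoncut⟩ := minimal_pair hconn hpair0
      by_cases hB1 : ∀ x ∈ compo G (s.erase u) a, ∀ M, MaxOn G s M → x ∈ M
      · have hCsingle : compo G (s.erase u) a = {a} := by
          rw [Finset.eq_singleton_iff_unique_mem]
          refine ⟨self_mem_compo hpair.2.1, fun b hb => ?_⟩
          by_contra hba
          obtain ⟨M₂, hM₂⟩ := MaxOn.exists (G := G) s
          obtain ⟨x, hx, y, hy, hadj⟩ := reach_ne_exists_adj
            ((conn_compo hpair.2.1).2 a (self_mem_compo hpair.2.1) b hb) (Ne.symm hba)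
          exact hM₂.2.1 x (hB1 x hx M₂ hM₂) y (hB1 y hy M₂ hM₂) (G.ne_of_adj hadj) hadj
        refine pendant_route s Z (fun s' Z' h1 h2 h3 => IH s' Z' (by omega) h2 h3) hconn hhyp
          hpair.1 hpair.2.1 hCsingle hpair.2.2.1 ?_
        exact fun M hM => hB1 a (self_mem_compo hpair.2.1) M hM
      · push_neg at hB1
        obtain ⟨z, hzC, M₁, hM₁, hzM₁⟩ := hB1
        have hzs : z ∈ s := Finset.mem_of_mem_erase (compo_subset hzC)
        have hzZ : z ∈ Z := by
          by_contra hzZ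
          exact hzM₁ (hhyp z hzs hzZ (hnoncut z hzC) M₁ hM₁)
        by_cases hZ2 : 2 ≤ Z.card
        · -- delete route
          have hzconn : Conn G (s.erase z) := hnoncut z hzC
          have hM₁sub : M₁ ⊆ s.erase z :=
            fun x hx => Finset.mem_erase.2 ⟨fun h => hzM₁ (h ▸ hx), hM₁.1 hx⟩
          have halpha_eq : alphaF G (s.erase z) = alphaF G s :=
            le_antisymm (alphaF_mono (Finset.erase_subset _ _))
              (hM₁.2.2 ▸ card_le_alphaF hM₁sub hM₁.2.1)
          have hHyp1 : Hyp G (s.erase z) (Z.erase z) := by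
            intro w hws₁ hwZ hwconn M' hM'
            have hwz : w ≠ z := (Finset.mem_erase.1 hws₁).1
            have hws : w ∈ s := Finset.mem_of_mem_erase hws₁
            have hwZ' : w ∉ Z := fun h => hwZ (Finset.mem_erase.2 ⟨hwz, h⟩)
            have hM's : MaxOn G s M' :=
              ⟨hM'.1.trans (Finset.erase_subset _ _), hM'.2.1, halpha_eq ▸ hM'.2.2⟩
            by_cases hzx : ∃ x ∈ s.erase z, x ≠ w ∧ G.Adj z x
            · obtain ⟨x, hxs₁, hxw, hadj⟩ := hzx
              have hxsw : x ∈ s.erase w := Finset.mem_erase.2 ⟨hxw, Finset.mem_of_mem_erase hxs₁⟩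
              have hzsw : z ∈ s.erase w := Finset.mem_erase.2 ⟨Ne.symm hwz, hzs⟩
              have hkey : ∀ y ∈ s.erase w, Reach G (s.erase w) y x := by
                intro y hy
                obtain ⟨hyw, hys⟩ := Finset.mem_erase.1 hy
                by_cases hyz : y = z
                · subst hyz; exact Reach.adj hy hxsw hadj
                · have hy1 : y ∈ (s.erase z).erase w :=
                    Finset.mem_erase.2 ⟨hyw, Finset.mem_erase.2 ⟨hyz, hys⟩⟩
                  have hx1 : x ∈ (s.erase z).erase w := Finset.mem_erase.2 ⟨hxw, hxs₁⟩
                  have hsub1 : (s.erase z).erase w ⊆ s.erase w := fun p hp => Finset.mem_erase.2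
                    ⟨(Finset.mem_erase.1 hp).1, Finset.mem_of_mem_erase (Finset.mem_erase.1 hp).2⟩
                  exact (hwconn.2 y hy1 x hx1).mono hsub1
              have hconnw : Conn G (s.erase w) :=
                ⟨⟨x, hxsw⟩, fun p hp q hq => (hkey p hp).trans (hkey q hq).symm⟩
              exact hhyp w hws hwZ' hconnw M' hM's
            · push_neg at hzx
              by_contra hwM'
              have hzM' : z ∉ M' := fun h => (Finset.mem_erase.1 (hM'.1 h)).1 rfl
              have hind : indepOn G (insert z M') := by
                intro p hp q hq hpq hadj
                rcases Finset.mem_insert.1 hp with rfl | hp' <;>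
                  rcases Finset.mem_insert.1 hq with rfl | hq'
                · exact hpq rfl
                · have hqw : q = w := by
                    by_contra hqw
                    exact hzx q (hM'.1 hq') hqw hadj
                  exact hwM' (hqw ▸ hq')
                · have hpw : p = w := by
                    by_contra hpw
                    exact hzx p (hM'.1 hp') hpw hadj.symm
                  exact hwM' (hpw ▸ hp')
                · exact hM'.2.1 p hp' q hq' hpq hadj
              have hcard1 : (insert z M').card = alphaF G s + 1 := by
                rw [Finset.card_insert_of_notMem hzM', hM'.2.2, halpha_eq]
              have hle := card_le_alphaF
                (Finset.insert_subset hzs (hM'.1.trans (Finset.erase_subset _ _))) hind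
              omega
          have hcor : (s.erase z).card = s.card - 1 := Finset.card_erase_of_mem hzs
          have hIH1 := IH (s.erase z) (Z.erase z) (by omega) hzconn hHyp1
          have hZcard : (Z.erase z).card = Z.card - 1 := Finset.card_erase_of_mem hzZ
          rw [halpha_eq] at hIH1
          omega
        · -- |Z| = 1 : find a second minimal branch avoiding z
          have hZeq : Z = {z} := by
            have h1 : 1 ≤ Z.card := Finset.card_pos.2 ⟨z, hzZ⟩
            have hZ1 : Z.card = 1 := by omega
            obtain ⟨w, hw⟩ := Finset.card_eq_one.1 hZ1
            rw [hw] at hzZ ⊢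
            simp only [Finset.mem_singleton] at hzZ
            rw [hzZ]
          have hpair1 : ∃ u' a', IsPair G s ({z} : Finset V) u' a' := by
            have hss : compo G (s.erase u) a ⊂ s.erase u := compo_subset.ssubset_of_ne hpair.2.2.1
            obtain ⟨b, hb1, hb2⟩ := Finset.exists_of_ssubset hss
            refine ⟨u, b, hpair.1, hb1, ?_, ?_⟩
            · intro heq
              have haC : a ∈ compo G (s.erase u) b := by rw [heq]; exact hpair.2.1
              apply hb2
              rw [compo_eq_of_mem haC]
              exact self_mem_compo hb1
            · rw [Finset.eq_empty_iff_forall_notMem]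
              intro w hw
              obtain ⟨hw1, hw2⟩ := Finset.mem_inter.1 hw
              simp only [Finset.mem_singleton] at hw2
              subst hw2
              have h1 : compo G (s.erase u) w = compo G (s.erase u) b := compo_eq_of_mem hw1
              have h2 : compo G (s.erase u) w = compo G (s.erase u) a := compo_eq_of_mem hzC
              apply hb2
              rw [← h2, h1]
              exact self_mem_compo hb1
          obtain ⟨u', a', hpair', hnoncut'⟩ := minimal_pair hconn hpair1
          have hB1' : ∀ x ∈ compo G (s.erase u') a', ∀ M, MaxOn G s M → x ∈ M := by
            intro x hx M hM
            have hxZ : x ∉ Z := by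
              rw [hZeq]
              simp only [Finset.mem_singleton]
              intro hxz
              subst hxz
              have hmem : x ∈ compo G (s.erase u') a' ∩ {x} := Finset.mem_inter.2 ⟨hx, by simp⟩
              rw [hpair'.2.2.2] at hmem
              simp at hmem
            exact hhyp x (Finset.mem_of_mem_erase (compo_subset hx)) hxZ (hnoncut' x hx) M hM
          have hCsingle : compo G (s.erase u') a' = {a'} := by
            rw [Finset.eq_singleton_iff_unique_mem]
            refine ⟨self_mem_compo hpair'.2.1, fun b hb => ?_⟩
            by_contra hba
            obtain ⟨M₂, hM₂⟩ := MaxOn.exists (G := G) s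
            obtain ⟨x, hx, y, hy, hadj⟩ := reach_ne_exists_adj
              ((conn_compo hpair'.2.1).2 a' (self_mem_compo hpair'.2.1) b hb) (Ne.symm hba)
            exact hM₂.2.1 x (hB1' x hx M₂ hM₂) y (hB1' y hy M₂ hM₂) (G.ne_of_adj hadj) hadj
          refine pendant_route s Z (fun s' Z' h1 h2 h3 => IH s' Z' (by omega) h2 h3) hconn hhyp
            hpair'.1 hpair'.2.1 hCsingle hpair'.2.2.1 ?_
          exact fun M hM => hB1' a' (self_mem_compo hpair'.2.1) M hM

/-! ### glue with the root-level definitions -/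

lemma indepSet_iff (M : Finset V) : IndepSet G ↑M ↔ indepOn G M := by
  constructor
  · intro h a ha b hb hne
    exact h (Finset.mem_coe.2 ha) (Finset.mem_coe.2 hb) hne
  · intro h a ha b hb hne
    exact h a (Finset.mem_coe.1 ha) b (Finset.mem_coe.1 hb) hne

lemma indepNum_eq [Fintype V] : indepNum G = alphaF G Finset.univ := by
  classical
  have hbdd : BddAbove {n | ∃ t : Finset V, IndepSet G ↑t ∧ t.card = n} := by
    refine ⟨Fintype.card V, ?_⟩
    rintro n ⟨t, _, rfl⟩
    exact Finset.card_le_univ t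
  apply le_antisymm
  · apply csSup_le
    · exact ⟨0, ⟨∅, (indepSet_iff (G := G) ∅).2 indepOn_empty, rfl⟩⟩
    · rintro n ⟨t, ht, rfl⟩
      exact card_le_alphaF (Finset.subset_univ t) ((indepSet_iff (G := G) t).1 ht)
  · apply le_csSup hbdd
    obtain ⟨M, _, h2, h3⟩ := exists_maxOn (G := G) Finset.univ
    exact ⟨M, (indepSet_iff (G := G) M).2 h2, h3⟩

lemma conn_univ_of_connected [Fintype V] (h : G.Connected) : Conn G Finset.univ := by
  haveI : Nonempty V := h.nonempty
  refine ⟨Finset.univ_nonempty, fun a _ b _ => ?_⟩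
  obtain ⟨p⟩ := h.preconnected a b
  exact ⟨p, fun x _ => Finset.mem_univ x⟩

lemma reachable_induce_of_walk {w : V} :
    ∀ {a b : V} (p : G.Walk a b), (∀ x ∈ p.support, x ≠ w) →
      ∀ (ha : a ∈ ({w}ᶜ : Set V)) (hb : b ∈ ({w}ᶜ : Set V)),
      (G.induce ({w}ᶜ : Set V)).Reachable ⟨a, ha⟩ ⟨b, hb⟩ := by
  intro a b p
  induction p with
  | nil => intro _ ha hb; exact SimpleGraph.Reachable.refl _
  | @cons a c b h q ih =>
    intro hp ha hb
    have hc : c ∈ ({w}ᶜ : Set V) := by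
      have := hp c (by simp [SimpleGraph.Walk.support_cons, q.start_mem_support])
      simpa using this
    have hadj : (G.induce ({w}ᶜ : Set V)).Adj ⟨a, ha⟩ ⟨c, hc⟩ := by
      simp only [SimpleGraph.induce]
      exact h
    exact (hadj.reachable).trans
      (ih (fun x hx => hp x (by simp [SimpleGraph.Walk.support_cons, hx])) hc hb)

lemma induce_connected_of_conn [Fintype V] {w : V} (h : Conn G (Finset.univ.erase w)) :
    (G.induce ({w}ᶜ : Set V)).Connected := by
  obtain ⟨⟨y, hy⟩, hreach⟩ := h
  have hyw : y ≠ w := (Finset.mem_erase.1 hy).1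
  haveI : Nonempty ({w}ᶜ : Set V) := ⟨⟨y, by simpa using hyw⟩⟩
  refine ⟨fun a b => ?_⟩
  have haw : (a : V) ≠ w := Set.mem_compl_singleton_iff.1 a.2
  have hbw : (b : V) ≠ w := Set.mem_compl_singleton_iff.1 b.2
  have hau : (a : V) ∈ Finset.univ.erase w := Finset.mem_erase.2 ⟨haw, Finset.mem_univ _⟩
  have hbu : (b : V) ∈ Finset.univ.erase w := Finset.mem_erase.2 ⟨hbw, Finset.mem_univ _⟩
  obtain ⟨p, hp⟩ := hreach a.1 hau b.1 hbu
  have hsup : ∀ x ∈ p.support, x ≠ w := fun x hx => (Finset.mem_erase.1 (hp x hx)).1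
  exact reachable_induce_of_walk p hsup a.2 b.2

end AMinProof

/-- Every α-minimal connected graph has at most `2α(G) − 1` vertices. -/
theorem card_le_of_alphaMinimal {V : Type*} [Fintype V] (G : SimpleGraph V)
    (hG : AlphaMinimal G) : Fintype.card V ≤ 2 * indepNum G - 1 := by
  classical
  obtain ⟨hconn, hmin⟩ := hG
  haveI : Nonempty V := hconn.nonempty
  have hconnU : AMinProof.Conn G Finset.univ := AMinProof.conn_univ_of_connected hconn
  have hHyp : AMinProof.Hyp G Finset.univ ∅ := by
    intro w hw _ hwconn M hM
    rcases hmin w with h1 | h2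
    · exact absurd (AMinProof.induce_connected_of_conn hwconn) h1
    · by_contra hwM
      have hMsub : M ⊆ Finset.univ.erase w :=
        fun x hx => Finset.mem_erase.2 ⟨fun h => hwM (h ▸ hx), Finset.mem_univ _⟩
      have hpM : ∀ x ∈ M, x ∈ ({w}ᶜ : Set V) := by
        intro x hx
        simpa using (Finset.mem_erase.1 (hMsub hx)).1
      set t' : Finset ({w}ᶜ : Set V) := M.subtype (fun x => x ∈ ({w}ᶜ : Set V)) with ht'
      have hcard' : t'.card = M.card := by
        rw [ht', Finset.card_subtype, Finset.filter_true_of_mem hpM]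
      have hind' : IndepSet (G.induce ({w}ᶜ : Set V)) ↑t' := by
        intro x hx y hy hne hadj
        have hxM : (x : V) ∈ M := by
          have := Finset.mem_coe.1 hx
          rw [ht'] at this
          exact (Finset.mem_subtype.1 this)
        have hyM : (y : V) ∈ M := by
          have := Finset.mem_coe.1 hy
          rw [ht'] at this
          exact (Finset.mem_subtype.1 this)
        have hxy : (x : V) ≠ (y : V) := fun h => hne (Subtype.ext h)
        have hadj' : G.Adj x y := hadj
        exact hM.2.1 x hxM y hyM hxy hadj'
      have hge : M.card ≤ indepNum (G.induce ({w}ᶜ : Set V)) := by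
        apply le_csSup
        · refine ⟨Fintype.card ({w}ᶜ : Set V), ?_⟩
          rintro n ⟨t, _, rfl⟩
          exact Finset.card_le_univ t
        · exact ⟨t', hind', hcard'⟩
      have heq := AMinProof.indepNum_eq (G := G)
      have hMcard : M.card = AMinProof.alphaF G Finset.univ := hM.2.2
      omega
  have hmain := AMinProof.mainT (G := G) (Finset.univ.card) Finset.univ ∅ le_rfl hconnU hHyp
  rw [Finset.card_empty] at hmain
  have heq := AMinProof.indepNum_eq (G := G)
  rw [← Finset.card_univ]
  omega
end

section
/- For every connected simple graph G, there exists a connected induced subgraph H of G such that α(H) = α(G) and |V(H)| ≤ 2·α(G) − 1. -/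
/-!
Call a vertex `z` of a connected vertex set `s` removable if `G[s - z]` is still connected and
`α(s - z) = α(s)`. A connected set of minimum size with `α = α(G)` has no removable vertex, so it
suffices to prove `|s| + 1 ≤ 2 α(s) + #removable(s)` for every connected `s`, by strong induction.

Deleting a removable vertex creates no new ones. If `s` has none, every non-cut vertex lies in
every maximum independent set, so non-cut vertices are pairwise nonadjacent. Among all components
of all `s - v`, one of minimum size consists of non-cut vertices, hence is a single vertex `x`
pendant at `v`. As `x` lies in every maximum independent set, `α(s)` is the sum of `α` over the
components of `s - v`. A removable vertex of such a component must be its only neighbour of `v`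
(otherwise it would be removable in `s`), so each component has at most one; `{x}` has none, and
neither has some other component: otherwise `v` together with maximum independent sets of the
components avoiding those neighbours would be a maximum independent set of `s` missing `x`.
Summing the induction hypothesis over the components gives `|s| + 1 ≤ 2 α(s)`.
-/

open Finset

section

variable {W : Type*} {H : SimpleGraph W}

lemma bddAbove_card_indepSet [Fintype W] (H : SimpleGraph W) :
    BddAbove {n | ∃ t : Finset W, IndepSet H t ∧ t.card = n} :=
  bddAbove_def.2 ⟨Fintype.card W, by rintro _ ⟨t, -, rfl⟩; exact t.card_le_univ⟩

lemma IndepSet.card_le_indepNum [Fintype W] {t : Finset W} (ht : IndepSet H t) :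
    t.card ≤ indepNum H :=
  le_csSup (bddAbove_card_indepSet H) ⟨t, ht, rfl⟩

lemma exists_indepSet_card_eq_indepNum [Fintype W] (H : SimpleGraph W) :
    ∃ t : Finset W, IndepSet H t ∧ t.card = indepNum H :=
  Nat.sSup_mem (s := {n | ∃ t : Finset W, IndepSet H t ∧ t.card = n})
    ⟨0, ∅, by simp [IndepSet], rfl⟩ (bddAbove_card_indepSet H)

end

lemma sum_add_two_le_card {ι : Type*} [DecidableEq ι] {I : Finset ι} {f : ι → ℕ}
    (hf : ∀ k ∈ I, f k ≤ 1) {i j : ι} (hi : i ∈ I) (hj : j ∈ I) (hij : j ≠ i)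
    (hfi : f i = 0) (hfj : f j = 0) : ∑ k ∈ I, f k + 2 ≤ I.card := by
  have hj' : j ∈ I.erase i := mem_erase.2 ⟨hij, hj⟩
  rw [← sum_erase I hfi, ← sum_erase (I.erase i) hfj]
  have hle : ∑ k ∈ (I.erase i).erase j, f k ≤ ((I.erase i).erase j).card • 1 :=
    sum_le_card_nsmul _ _ _ fun k hk => hf k (mem_of_mem_erase (mem_of_mem_erase hk))
  have hpos := card_pos.2 ⟨j, hj'⟩
  rw [card_erase_of_mem hj', card_erase_of_mem hi, smul_eq_mul, mul_one] at hle
  rw [card_erase_of_mem hi] at hpos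
  omega

section

variable {V : Type*} {G : SimpleGraph V} {s t B B' : Finset V} {a b c u v w x z : V}

lemma IndepSet.card_le_indepNum_induce (hts : t ⊆ s) (ht : IndepSet G t) :
    t.card ≤ indepNum (G.induce s) := by
  classical
  have hsub : IndepSet (G.induce s) ↑(t.subtype (· ∈ (s : Set V))) :=
    fun a ha b hb hab => ht (by simpa using ha) (by simpa using hb) (Subtype.val_injective.ne hab)
  calc t.card = (t.subtype (· ∈ (s : Set V))).card := by
        rw [card_subtype, filter_true_of_mem fun a ha => mem_coe.2 (hts ha)]
    _ ≤ indepNum (G.induce s) := hsub.card_le_indepNum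

lemma exists_indepSet_card_eq_indepNum_induce (G : SimpleGraph V) (s : Finset V) :
    ∃ t ⊆ s, IndepSet G t ∧ t.card = indepNum (G.induce s) := by
  obtain ⟨t, ht, hcard⟩ := exists_indepSet_card_eq_indepNum (G.induce s)
  refine ⟨t.map (Function.Embedding.subtype _), fun a ha => ?_, ?_, by simpa using hcard⟩
  · obtain ⟨b, -, rfl⟩ := mem_map.1 ha
    exact b.2
  · rw [coe_map]
    exact (Subtype.val_injective.injOn.pairwise_image).2 ht

lemma indepNum_induce_mono (h : s ⊆ t) :
    indepNum (G.induce s) ≤ indepNum (G.induce t) := by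
  obtain ⟨u, hus, hu, hcard⟩ := exists_indepSet_card_eq_indepNum_induce G s
  exact hcard ▸ hu.card_le_indepNum_induce (hus.trans h)

lemma indepNum_induce_le_card (s : Finset V) : indepNum (G.induce s) ≤ s.card := by
  obtain ⟨t, hts, -, hcard⟩ := exists_indepSet_card_eq_indepNum_induce G s
  exact hcard ▸ card_le_card hts

lemma indepNum_induce_singleton (a : V) : indepNum (G.induce ({a} : Finset V)) = 1 := by
  refine le_antisymm (indepNum_induce_le_card _) ?_
  have h : IndepSet G ↑({a} : Finset V) := by simp [IndepSet]
  simpa using h.card_le_indepNum_induce (subset_refl _)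

lemma one_le_indepNum_induce (ha : a ∈ s) : 1 ≤ indepNum (G.induce s) :=
  indepNum_induce_singleton (G := G) a ▸ indepNum_induce_mono (singleton_subset_iff.2 ha)

lemma indepNum_induce_univ [Fintype V] : indepNum (G.induce (univ : Finset V)) = indepNum G := by
  apply le_antisymm
  · obtain ⟨t, -, ht, hcard⟩ := exists_indepSet_card_eq_indepNum_induce G univ
    exact hcard ▸ ht.card_le_indepNum
  · obtain ⟨t, ht, hcard⟩ := exists_indepSet_card_eq_indepNum G
    exact hcard ▸ ht.card_le_indepNum_induce (subset_univ t)

lemma connected_induce_singleton (a : V) : (G.induce ({a} : Finset V)).Connected := by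
  rw [coe_singleton]
  exact ⟨.of_subsingleton⟩

lemma eq_of_connected_induce_of_adj_mem (hs : (G.induce s).Connected) (hts : t ⊆ s)
    (ht : t.Nonempty) (hclosed : ∀ a ∈ t, ∀ b ∈ s, G.Adj a b → b ∈ t) : t = s := by
  obtain ⟨a, ha⟩ := ht
  refine subset_antisymm hts fun b hb => ?_
  by_contra hbt
  obtain ⟨p⟩ := hs.preconnected ⟨a, hts ha⟩ ⟨b, hb⟩
  obtain ⟨d, -, hd, hd'⟩ := p.exists_boundary_dart {x | x.1 ∈ t} ha hbt
  exact hd' (hclosed _ hd _ d.snd.2 d.adj)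

lemma exists_adj_of_connected_induce (hs : (G.induce s).Connected) (h : 1 < s.card) (ha : a ∈ s) :
    ∃ b ∈ s, G.Adj a b := by
  by_contra! hno
  have := eq_of_connected_induce_of_adj_mem hs (singleton_subset_iff.2 ha) (singleton_nonempty a)
    fun x hx b hb hab => absurd (mem_singleton.1 hx ▸ hab) (hno b hb)
  simp [← this] at h

variable [DecidableEq V]

lemma indepNum_induce_add_one_le_insert (hv : v ∉ t)
    (hadj : ∀ u ∈ t, ¬ G.Adj v u) :
    indepNum (G.induce t) + 1 ≤ indepNum (G.induce ↑(insert v t)) := by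
  obtain ⟨u, hut, hu, hcard⟩ := exists_indepSet_card_eq_indepNum_induce G t
  have hins : IndepSet G ↑(insert v u) := by
    rw [coe_insert]
    exact hu.insert fun w hw _ => ⟨hadj w (hut hw), fun h => hadj w (hut hw) h.symm⟩
  rw [← hcard, ← card_insert_of_notMem fun h => hv (hut h)]
  exact hins.card_le_indepNum_induce (insert_subset_insert v hut)

lemma exists_adj_of_indepNum_induce_le (hts : t ⊆ s) (hz : z ∈ s) (hzt : z ∉ t)
    (h : indepNum (G.induce s) ≤ indepNum (G.induce t)) : ∃ u ∈ t, G.Adj z u := by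
  by_contra! hno
  have := indepNum_induce_add_one_le_insert hzt hno
  have := indepNum_induce_mono (G := G) (insert_subset hz hts)
  omega

lemma indepNum_induce_biUnion_le {ι : Type*} (I : Finset ι) (P : ι → Finset V) :
    indepNum (G.induce (I.biUnion P)) ≤ ∑ i ∈ I, indepNum (G.induce (P i)) := by
  obtain ⟨t, hts, ht, hcard⟩ := exists_indepSet_card_eq_indepNum_induce G (I.biUnion P)
  calc indepNum (G.induce (I.biUnion P)) = (I.biUnion fun i => t ∩ P i).card := by
        rw [← inter_biUnion, inter_eq_left.2 hts, hcard]
    _ ≤ ∑ i ∈ I, (t ∩ P i).card := card_biUnion_le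
    _ ≤ ∑ i ∈ I, indepNum (G.induce (P i)) := sum_le_sum fun i _ =>
        IndepSet.card_le_indepNum_induce inter_subset_right
          (ht.mono (coe_subset.2 inter_subset_left))

lemma sum_indepNum_induce_le {ι : Type*} {I : Finset ι} {P : ι → Finset V}
    (hsub : ∀ i ∈ I, P i ⊆ s) (hdisj : (I : Set ι).PairwiseDisjoint P)
    (hsep : ∀ i ∈ I, ∀ j ∈ I, i ≠ j → ∀ p ∈ P i, ∀ q ∈ P j, ¬ G.Adj p q) :
    ∑ i ∈ I, indepNum (G.induce (P i)) ≤ indepNum (G.induce s) := by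
  choose! t htP ht hcard using fun i => exists_indepSet_card_eq_indepNum_induce G (P i)
  have hind : IndepSet G ↑(I.biUnion t) := by
    intro p hp q hq hpq
    obtain ⟨i, hi, hpi⟩ := mem_biUnion.1 hp
    obtain ⟨j, hj, hqj⟩ := mem_biUnion.1 hq
    obtain rfl | hij := eq_or_ne i j
    · exact ht i hpi hqj hpq
    · exact hsep i hi j hj hij p (htP i hpi) q (htP j hqj)
  calc ∑ i ∈ I, indepNum (G.induce (P i)) = (I.biUnion t).card := by
        rw [card_biUnion (hdisj.mono htP)]
        exact sum_congr rfl fun i _ => (hcard i).symm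
    _ ≤ indepNum (G.induce s) :=
        hind.card_le_indepNum_induce (biUnion_subset.2 fun i hi => (htP i).trans (hsub i hi))

lemma connected_induce_insert (ht : (G.induce t).Connected) (hu : u ∈ t) (hadj : G.Adj v u) :
    (G.induce ↑(insert v t)).Connected := by
  rw [coe_insert, Set.insert_eq, ← coe_singleton]
  exact SimpleGraph.connected_induce_union (connected_induce_singleton v).preconnected
    ht.preconnected (mem_singleton_self v) hu hadj

open Classical in
noncomputable def componentIn (G : SimpleGraph V) (s : Finset V) (a : V) : Finset V :=
  s.filter fun b => ∃ t : Finset V, t ⊆ s ∧ a ∈ t ∧ b ∈ t ∧ (G.induce t).Connected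

lemma mem_componentIn :
    b ∈ componentIn G s a ↔
      b ∈ s ∧ ∃ t ⊆ s, a ∈ t ∧ b ∈ t ∧ (G.induce t).Connected := by
  simp [componentIn]

lemma componentIn_subset : componentIn G s a ⊆ s := fun _ hb => (mem_componentIn.1 hb).1

lemma subset_componentIn (hts : t ⊆ s) (hat : a ∈ t) (ht : (G.induce t).Connected) :
    t ⊆ componentIn G s a := fun _ hb => mem_componentIn.2 ⟨hts hb, t, hts, hat, hb, ht⟩

lemma mem_componentIn_self (ha : a ∈ s) : a ∈ componentIn G s a :=
  subset_componentIn (singleton_subset_iff.2 ha) (mem_singleton_self a)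
    (connected_induce_singleton a) (mem_singleton_self a)

lemma connected_induce_componentIn (ha : a ∈ s) : (G.induce (componentIn G s a)).Connected := by
  have hS : (componentIn G s a : Set V) =
      ⋃₀ {T : Set V | ∃ t ⊆ s, a ∈ t ∧ (G.induce t).Connected ∧ ↑t = T} := by
    ext b
    simp only [mem_coe, mem_componentIn, Set.mem_sUnion]
    constructor
    · rintro ⟨-, t, hts, hat, hbt, ht⟩
      exact ⟨t, ⟨t, hts, hat, ht, rfl⟩, hbt⟩
    · rintro ⟨_, ⟨t, hts, hat, ht, rfl⟩, hbt⟩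
      exact ⟨hts hbt, t, hts, hat, hbt, ht⟩
  rw [hS]
  refine SimpleGraph.induce_sUnion_connected_of_pairwise_not_disjoint
    ⟨_, {a}, singleton_subset_iff.2 ha, mem_singleton_self a,
      connected_induce_singleton a, rfl⟩ ?_ ?_
  · rintro _ _ ⟨t, -, hat, -, rfl⟩ ⟨t', -, hat', -, rfl⟩
    exact ⟨a, hat, hat'⟩
  · rintro _ ⟨t, -, -, ht, rfl⟩
    exact ht

lemma mem_componentIn_of_adj (hb : b ∈ componentIn G s a) (hc : c ∈ s) (hbc : G.Adj b c) :
    c ∈ componentIn G s a := by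
  obtain ⟨-, t, hts, hat, hbt, ht⟩ := mem_componentIn.1 hb
  refine subset_componentIn (insert_subset hc hts) (mem_insert_of_mem hat)
    (connected_induce_insert ht hbt hbc.symm) (mem_insert_self c t)

lemma componentIn_eq_of_mem (hb : b ∈ componentIn G s a) :
    componentIn G s b = componentIn G s a := by
  have ha : a ∈ s := by
    obtain ⟨-, t, hts, hat, -⟩ := mem_componentIn.1 hb
    exact hts hat
  have hab : componentIn G s a ⊆ componentIn G s b :=
    subset_componentIn componentIn_subset hb (connected_induce_componentIn ha)
  exact subset_antisymm (subset_componentIn componentIn_subset (hab (mem_componentIn_self ha))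
    (connected_induce_componentIn (componentIn_subset hb))) hab

lemma connected_induce_of_subset_componentIn (hv : v ∈ s) (h : s ⊆ componentIn G s v) :
    (G.induce s).Connected :=
  subset_antisymm componentIn_subset h ▸ connected_induce_componentIn hv

lemma subset_componentIn_of_adj (hts : t ⊆ s) (hv : v ∈ s) (ht : (G.induce t).Connected)
    (hu : u ∈ t) (hadj : G.Adj u v) : t ⊆ componentIn G s v :=
  (subset_insert v t).trans <| subset_componentIn (insert_subset hv hts) (mem_insert_self v t)
    (connected_induce_insert ht hu hadj.symm)

lemma exists_adj_mem_componentIn_erase (hs : (G.induce s).Connected) (hv : v ∈ s)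
    (hb : b ∈ s.erase v) : ∃ u ∈ componentIn G (s.erase v) b, G.Adj u v := by
  by_contra! hno
  have := eq_of_connected_induce_of_adj_mem hs (componentIn_subset.trans (erase_subset v s))
    ⟨b, mem_componentIn_self hb⟩ fun x hx y hy hxy => by
      by_cases hyv : y = v
      · exact absurd (hyv ▸ hxy) (hno x hx)
      · exact mem_componentIn_of_adj hx (mem_erase.2 ⟨hyv, hy⟩) hxy
  exact notMem_erase v s (componentIn_subset (this ▸ hv))

lemma mem_componentIn_erase_of_notMem (hs : (G.induce s).Connected) (hv : v ∈ s)
    (hb : b ∈ s.erase v) (hwv : w ≠ v) (hw : w ∉ componentIn G (s.erase v) b) :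
    b ∈ componentIn G (s.erase w) v := by
  obtain ⟨u, hu, hadj⟩ := exists_adj_mem_componentIn_erase hs hv hb
  refine subset_componentIn_of_adj (fun x hx => mem_erase.2 ⟨?_, ?_⟩)
    (mem_erase.2 ⟨hwv.symm, hv⟩) (connected_induce_componentIn hb) hu hadj
    (mem_componentIn_self hb)
  · rintro rfl; exact hw hx
  · exact mem_of_mem_erase (componentIn_subset hx)

noncomputable def componentsIn (G : SimpleGraph V) (s : Finset V) : Finset (Finset V) :=
  s.image (componentIn G s)

lemma mem_componentsIn : B ∈ componentsIn G s ↔ ∃ b ∈ s, componentIn G s b = B := mem_image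

lemma componentIn_mem_componentsIn (ha : a ∈ s) : componentIn G s a ∈ componentsIn G s :=
  mem_image_of_mem _ ha

lemma subset_of_mem_componentsIn (hB : B ∈ componentsIn G s) : B ⊆ s := by
  obtain ⟨b, -, rfl⟩ := mem_componentsIn.1 hB
  exact componentIn_subset

lemma connected_induce_of_mem_componentsIn (hB : B ∈ componentsIn G s) :
    (G.induce B).Connected := by
  obtain ⟨b, hb, rfl⟩ := mem_componentsIn.1 hB
  exact connected_induce_componentIn hb

lemma componentIn_eq_of_mem_componentsIn (hB : B ∈ componentsIn G s) (ha : a ∈ B) :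
    componentIn G s a = B := by
  obtain ⟨b, -, rfl⟩ := mem_componentsIn.1 hB
  exact componentIn_eq_of_mem ha

lemma pairwiseDisjoint_componentsIn :
    (componentsIn G s : Set (Finset V)).PairwiseDisjoint id := by
  intro B hB B' hB' hne
  refine disjoint_left.2 fun a ha ha' => hne ?_
  rw [← componentIn_eq_of_mem_componentsIn hB ha, componentIn_eq_of_mem_componentsIn hB' ha']

lemma not_adj_of_mem_componentsIn (hB : B ∈ componentsIn G s) (hB' : B' ∈ componentsIn G s)
    (hne : B ≠ B') {p q : V} (hp : p ∈ B) (hq : q ∈ B') : ¬ G.Adj p q := fun hpq => by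
  have h := componentIn_eq_of_mem (mem_componentIn_of_adj
    (mem_componentIn_self (subset_of_mem_componentsIn hB hp)) (subset_of_mem_componentsIn hB' hq)
    hpq)
  rw [componentIn_eq_of_mem_componentsIn hB' hq, componentIn_eq_of_mem_componentsIn hB hp] at h
  exact hne h.symm

lemma biUnion_componentsIn : (componentsIn G s).biUnion id = s :=
  subset_antisymm (biUnion_subset.2 fun _ hB => subset_of_mem_componentsIn hB) fun _ ha =>
    mem_biUnion.2 ⟨_, componentIn_mem_componentsIn ha, mem_componentIn_self ha⟩

lemma card_eq_sum_card_componentsIn : s.card = ∑ B ∈ componentsIn G s, B.card := by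
  conv_lhs => rw [← biUnion_componentsIn (G := G) (s := s)]
  exact card_biUnion pairwiseDisjoint_componentsIn

lemma sum_indepNum_induce_le_biUnion {I : Finset (Finset V)} {Q : Finset V → Finset V}
    (hI : I ⊆ componentsIn G s) (hQ : ∀ B ∈ I, Q B ⊆ B) :
    ∑ B ∈ I, indepNum (G.induce (Q B)) ≤ indepNum (G.induce (I.biUnion Q)) :=
  sum_indepNum_induce_le (fun _ hB => subset_biUnion_of_mem Q hB)
    ((pairwiseDisjoint_componentsIn.subset (coe_subset.2 hI)).mono_on hQ)
    fun _ h₁ _ h₂ hne _ hp _ hq => not_adj_of_mem_componentsIn (hI h₁) (hI h₂) hne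
      (hQ _ h₁ hp) (hQ _ h₂ hq)

lemma indepNum_induce_eq_sum_componentsIn :
    indepNum (G.induce s) = ∑ B ∈ componentsIn G s, indepNum (G.induce B) := by
  conv_lhs => rw [← biUnion_componentsIn (G := G) (s := s)]
  exact le_antisymm (indepNum_induce_biUnion_le _ _)
    (sum_indepNum_induce_le_biUnion (subset_refl _) fun _ _ => subset_refl _)

lemma exists_adj_of_mem_componentsIn_erase (hs : (G.induce s).Connected) (hv : v ∈ s)
    (hB : B ∈ componentsIn G (s.erase v)) : ∃ u ∈ B, G.Adj u v := by
  obtain ⟨b, hb, rfl⟩ := mem_componentsIn.1 hB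
  exact exists_adj_mem_componentIn_erase hs hv hb

lemma connected_induce_erase_of_mem_componentsIn (hs : (G.induce s).Connected) (hv : v ∈ s)
    (hB : B ∈ componentsIn G (s.erase v)) (hz : z ∈ B)
    (hconn : (G.induce (B.erase z)).Connected) (hu : u ∈ B.erase z) (huv : G.Adj u v) :
    (G.induce (s.erase z)).Connected := by
  have hBs := subset_of_mem_componentsIn hB
  have hzv : z ≠ v := (mem_erase.1 (hBs hz)).1
  have hvz : v ∈ s.erase z := mem_erase.2 ⟨hzv.symm, hv⟩
  refine connected_induce_of_subset_componentIn hvz fun b hb => ?_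
  by_cases hbv : b = v
  · exact hbv ▸ mem_componentIn_self hb
  have hb' : b ∈ s.erase v := mem_erase.2 ⟨hbv, mem_of_mem_erase hb⟩
  by_cases hbB : b ∈ B
  · exact subset_componentIn_of_adj (erase_subset_erase z (hBs.trans (erase_subset v s))) hvz
      hconn hu huv (mem_erase.2 ⟨(mem_erase.1 hb).1, hbB⟩)
  · refine mem_componentIn_erase_of_notMem hs hv hb' hzv fun h => hbB ?_
    rw [← componentIn_eq_of_mem_componentsIn hB hz, componentIn_eq_of_mem h]
    exact mem_componentIn_self hb'

lemma indepNum_induce_le_erase_of_mem_componentsIn (hB : B ∈ componentsIn G t) (hz : z ∈ B)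
    (hα : indepNum (G.induce (B.erase z)) = indepNum (G.induce B)) :
    indepNum (G.induce t) ≤ indepNum (G.induce (t.erase z)) := by
  set P : Finset V → Finset V := fun B' => if B' = B then B.erase z else B'
  have hPB : ∀ B', P B' ⊆ B' := fun B' => by
    by_cases h : B' = B
    · rw [show P B' = B.erase z from if_pos h, h]
      exact erase_subset z B
    · rw [show P B' = B' from if_neg h]
  have hsub : ∀ B' ∈ componentsIn G t, P B' ⊆ t.erase z := fun B' hB' y hy => by
    refine mem_erase.2 ⟨?_, subset_of_mem_componentsIn hB' (hPB B' hy)⟩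
    rintro rfl
    by_cases h : B' = B
    · simp [P, h] at hy
    · exact disjoint_left.1 (pairwiseDisjoint_componentsIn hB' hB h) (hPB B' hy) hz
  rw [indepNum_induce_eq_sum_componentsIn (s := t)]
  calc ∑ B' ∈ componentsIn G t, indepNum (G.induce B')
      = ∑ B' ∈ componentsIn G t, indepNum (G.induce (P B')) := sum_congr rfl fun B' _ => by
        by_cases h : B' = B
        · rw [show P B' = B.erase z from if_pos h, hα, h]
        · rw [show P B' = B' from if_neg h]
    _ ≤ indepNum (G.induce ((componentsIn G t).biUnion P)) :=
        sum_indepNum_induce_le_biUnion (subset_refl _) fun B' _ => hPB B'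
    _ ≤ indepNum (G.induce (t.erase z)) := indepNum_induce_mono (biUnion_subset.2 hsub)

lemma exists_componentIn_ssubset (hs : (G.induce s).Connected) (hv : v ∈ s)
    (hw : w ∈ componentIn G (s.erase v) a) (hcut : ¬ (G.induce (s.erase w)).Connected) :
    ∃ b ∈ s.erase w, componentIn G (s.erase w) b ⊂ componentIn G (s.erase v) a := by
  have hwv : w ≠ v := (mem_erase.1 (componentIn_subset hw)).1
  have hvw : v ∈ s.erase w := mem_erase.2 ⟨hwv.symm, hv⟩
  obtain ⟨b, hb, hbv⟩ : ∃ b ∈ s.erase w, b ∉ componentIn G (s.erase w) v := by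
    by_contra! h
    exact hcut (connected_induce_of_subset_componentIn hvw h)
  have hbC := mem_componentIn_self (G := G) hb
  refine ⟨b, hb, (ssubset_iff_of_subset fun c hc => ?_).2
    ⟨w, hw, fun h => notMem_erase w s (componentIn_subset h)⟩⟩
  by_contra hcA
  have hcb : componentIn G (s.erase w) c = componentIn G (s.erase w) b := componentIn_eq_of_mem hc
  have hcv : c ≠ v := by
    rintro rfl
    exact hbv (hcb ▸ hbC)
  have hwc : w ∉ componentIn G (s.erase v) c := fun h => hcA <| by
    rw [← componentIn_eq_of_mem hw, componentIn_eq_of_mem h]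
    exact mem_componentIn_self (mem_erase.2 ⟨hcv, mem_of_mem_erase (componentIn_subset hc)⟩)
  have hcv' := mem_componentIn_erase_of_notMem hs hv
    (mem_erase.2 ⟨hcv, mem_of_mem_erase (componentIn_subset hc)⟩) hwv hwc
  exact hbv (componentIn_eq_of_mem hcv' ▸ hcb ▸ hbC)

lemma exists_pendant (hs : (G.induce s).Connected) (h : 1 < s.card)
    (hind : ∀ a ∈ s, ∀ b ∈ s, (G.induce (s.erase a)).Connected →
      (G.induce (s.erase b)).Connected → ¬ G.Adj a b) :
    ∃ v ∈ s, ∃ x ∈ s.erase v, componentIn G (s.erase v) x = {x} := by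
  obtain ⟨a₀, ha₀, b₀, hb₀, hab₀⟩ := one_lt_card.1 h
  obtain ⟨⟨v, a⟩, hva, hmin⟩ := s.offDiag.exists_min_image
    (fun p => (componentIn G (s.erase p.1) p.2).card)
    ⟨(a₀, b₀), mem_offDiag.2 ⟨ha₀, hb₀, hab₀⟩⟩
  obtain ⟨hv, ha, hav⟩ := mem_offDiag.1 hva
  have ha' : a ∈ s.erase v := mem_erase.2 ⟨hav.symm, ha⟩
  have haA := mem_componentIn_self (G := G) ha'
  have hnoncut : ∀ w ∈ componentIn G (s.erase v) a, (G.induce (s.erase w)).Connected := by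
    intro w hw
    by_contra hcut
    obtain ⟨b, hb, hlt⟩ := exists_componentIn_ssubset hs hv hw hcut
    have hwb : (w, b) ∈ s.offDiag := mem_offDiag.2
      ⟨mem_of_mem_erase (componentIn_subset hw), mem_of_mem_erase hb, (mem_erase.1 hb).1.symm⟩
    exact (card_lt_card hlt).not_ge (hmin _ hwb)
  refine ⟨v, hv, a, ha', eq_singleton_iff_unique_mem.2 ⟨haA, fun b hb => ?_⟩⟩
  by_contra hba
  obtain ⟨c, hc, hac⟩ := exists_adj_of_connected_induce (connected_induce_componentIn ha')
    (one_lt_card.2 ⟨a, haA, b, hb, Ne.symm hba⟩) haA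
  have hcs := mem_of_mem_erase (componentIn_subset hc)
  exact hind a ha c hcs (hnoncut a haA) (hnoncut c hc) hac

open Classical in
/-- For connected `s`, `removableVerts G s = ∅` says that `G[s]` is `AlphaMinimal`. -/
noncomputable def removableVerts (G : SimpleGraph V) (s : Finset V) : Finset V :=
  s.filter fun z => (G.induce (s.erase z)).Connected ∧
    indepNum (G.induce (s.erase z)) = indepNum (G.induce s)

lemma mem_removableVerts :
    z ∈ removableVerts G s ↔ z ∈ s ∧ (G.induce (s.erase z)).Connected ∧
      indepNum (G.induce (s.erase z)) = indepNum (G.induce s) := by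
  simp [removableVerts]

lemma removableVerts_singleton : removableVerts G {x} = ∅ :=
  eq_empty_of_forall_notMem fun z hz => by
    obtain ⟨hzx, hconn, -⟩ := mem_removableVerts.1 hz
    rw [mem_singleton.1 hzx, erase_singleton, coe_empty] at hconn
    obtain ⟨⟨_, h⟩⟩ := hconn.nonempty
    exact h

lemma mem_removableVerts_of_notMem (hz : z ∈ s) (hconn : (G.induce (s.erase z)).Connected)
    (hts : t ⊆ s) (ht : IndepSet G t) (hcard : indepNum (G.induce s) ≤ t.card) (hzt : z ∉ t) :
    z ∈ removableVerts G s :=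
  mem_removableVerts.2 ⟨hz, hconn, le_antisymm (indepNum_induce_mono (erase_subset z s))
    (hcard.trans (ht.card_le_indepNum_induce fun _ hy =>
      mem_erase.2 ⟨fun h => hzt (h ▸ hy), hts hy⟩))⟩

lemma removableVerts_erase_subset (hz : z ∈ removableVerts G s) :
    removableVerts G (s.erase z) ⊆ (removableVerts G s).erase z := by
  obtain ⟨hzs, -, hαz⟩ := mem_removableVerts.1 hz
  intro y hy
  obtain ⟨hy, hconn, hαy⟩ := mem_removableVerts.1 hy
  obtain ⟨hyz, hys⟩ := mem_erase.1 hy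
  have hsub : (s.erase z).erase y ⊆ s.erase y := by
    rw [erase_right_comm]
    exact erase_subset z _
  have hα : indepNum (G.induce s) ≤ indepNum (G.induce ((s.erase z).erase y)) := by
    rw [hαy, hαz]
  obtain ⟨u, hu, hzu⟩ := exists_adj_of_indepNum_induce_le (hsub.trans (erase_subset y s)) hzs
    (fun h => notMem_erase z s (mem_of_mem_erase h)) hα
  have hins : insert z ((s.erase z).erase y) = s.erase y := by
    rw [erase_right_comm, insert_erase (mem_erase.2 ⟨hyz.symm, hzs⟩)]
  refine mem_erase.2 ⟨hyz, mem_removableVerts.2 ⟨hys, ?_, ?_⟩⟩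
  · rw [← hins]
    exact connected_induce_insert hconn hu hzu
  · exact le_antisymm (indepNum_induce_mono (erase_subset y s))
      (hα.trans (indepNum_induce_mono hsub))

lemma adj_of_componentIn_erase_eq_singleton (hs : (G.induce s).Connected) (hv : v ∈ s)
    (hx : x ∈ s.erase v) (hA : componentIn G (s.erase v) x = {x}) : G.Adj x v := by
  obtain ⟨u, hu, huv⟩ := exists_adj_mem_componentIn_erase hs hv hx
  rw [hA, mem_singleton] at hu
  exact hu ▸ huv

lemma connected_induce_erase_of_componentIn_erase_eq_singleton (hs : (G.induce s).Connected)
    (hv : v ∈ s) (hx : x ∈ s.erase v) (hA : componentIn G (s.erase v) x = {x}) :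
    (G.induce (s.erase x)).Connected := by
  have hxv : x ≠ v := (mem_erase.1 hx).1
  refine connected_induce_of_subset_componentIn (mem_erase.2 ⟨hxv.symm, hv⟩) fun b hb => ?_
  by_cases hbv : b = v
  · rw [hbv]
    exact mem_componentIn_self (mem_erase.2 ⟨hxv.symm, hv⟩)
  have hb' : b ∈ s.erase v := mem_erase.2 ⟨hbv, mem_of_mem_erase hb⟩
  refine mem_componentIn_erase_of_notMem hs hv hb' hxv fun h => (mem_erase.1 hb).1 ?_
  have hb'' := mem_componentIn_self (G := G) hb'
  rwa [← componentIn_eq_of_mem h, hA, mem_singleton] at hb''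

lemma eq_of_mem_removableVerts_of_adj (hs : (G.induce s).Connected)
    (hE : removableVerts G s = ∅) (hv : v ∈ s)
    (hα : indepNum (G.induce (s.erase v)) = indepNum (G.induce s))
    (hB : B ∈ componentsIn G (s.erase v)) (hz : z ∈ removableVerts G B) (hu : u ∈ B)
    (huv : G.Adj u v) : u = z := by
  by_contra huz
  obtain ⟨hzB, hconn, hαB⟩ := mem_removableVerts.1 hz
  have hαz : indepNum (G.induce s) ≤ indepNum (G.induce (s.erase z)) := calc
    indepNum (G.induce s) = indepNum (G.induce (s.erase v)) := hα.symm
    _ ≤ indepNum (G.induce ((s.erase v).erase z)) :=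
        indepNum_induce_le_erase_of_mem_componentsIn hB hzB hαB
    _ ≤ indepNum (G.induce (s.erase z)) :=
        indepNum_induce_mono (erase_subset_erase z (erase_subset v s))
  have : z ∈ removableVerts G s := mem_removableVerts.2
    ⟨mem_of_mem_erase (subset_of_mem_componentsIn hB hzB),
      connected_induce_erase_of_mem_componentsIn hs hv hB hzB hconn (mem_erase.2 ⟨huz, hu⟩) huv,
      le_antisymm (indepNum_induce_mono (erase_subset z s)) hαz⟩
  simp [hE] at this

lemma exists_mem_componentsIn_removableVerts_eq_empty (hs : (G.induce s).Connected)
    (hE : removableVerts G s = ∅) (hv : v ∈ s) (hx : x ∈ s.erase v)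
    (hA : componentIn G (s.erase v) x = {x})
    (hα : indepNum (G.induce (s.erase v)) = indepNum (G.induce s)) :
    ∃ B ∈ componentsIn G (s.erase v), B ≠ {x} ∧ removableVerts G B = ∅ := by
  by_contra! h
  have : Nonempty V := ⟨v⟩
  choose! z hz using h
  have hxCC : {x} ∈ componentsIn G (s.erase v) := hA ▸ componentIn_mem_componentsIn hx
  set I := (componentsIn G (s.erase v)).erase {x}
  set U := I.biUnion fun B => B.erase (z B)
  have hUsub : U ⊆ (s.erase v).erase x := biUnion_subset.2 fun B hB y hy => by
    obtain ⟨hBx, hB⟩ := mem_erase.1 hB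
    have hyB := mem_of_mem_erase hy
    refine mem_erase.2 ⟨fun hyx => hBx ?_, subset_of_mem_componentsIn hB hyB⟩
    rw [← componentIn_eq_of_mem_componentsIn hB hyB, hyx, hA]
  have hvU : ∀ y ∈ U, ¬ G.Adj v y := fun y hy hvy => by
    obtain ⟨B, hB, hyB⟩ := mem_biUnion.1 hy
    obtain ⟨hBx, hB⟩ := mem_erase.1 hB
    exact (mem_erase.1 hyB).1 (eq_of_mem_removableVerts_of_adj hs hE hv hα hB (hz B hB hBx)
      (mem_of_mem_erase hyB) hvy.symm)
  have hxv : x ≠ v := (mem_erase.1 hx).1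
  have hαx : indepNum (G.induce s) ≤ indepNum (G.induce (s.erase x)) := calc
    indepNum (G.induce s)
      = ∑ B ∈ componentsIn G (s.erase v), indepNum (G.induce B) := by
        rw [← hα, indepNum_induce_eq_sum_componentsIn]
    _ = ∑ B ∈ I, indepNum (G.induce (B.erase (z B))) + 1 := by
        rw [← sum_erase_add _ _ hxCC, indepNum_induce_singleton]
        refine congrArg (· + 1) (sum_congr rfl fun B hB => ?_)
        exact (mem_removableVerts.1 (hz B (mem_of_mem_erase hB) (ne_of_mem_erase hB))).2.2.symm
    _ ≤ indepNum (G.induce U) + 1 := Nat.add_le_add_right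
        (sum_indepNum_induce_le_biUnion (erase_subset _ _) fun B _ => erase_subset _ _) 1
    _ ≤ indepNum (G.induce ↑(insert v U)) := indepNum_induce_add_one_le_insert
        (fun h => notMem_erase v s (mem_of_mem_erase (hUsub h))) hvU
    _ ≤ indepNum (G.induce (s.erase x)) := indepNum_induce_mono <| insert_subset
        (mem_erase.2 ⟨hxv.symm, hv⟩) (hUsub.trans (erase_subset_erase x (erase_subset v s)))
  have : x ∈ removableVerts G s := mem_removableVerts.2 ⟨mem_of_mem_erase hx,
    connected_induce_erase_of_componentIn_erase_eq_singleton hs hv hx hA,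
    le_antisymm (indepNum_induce_mono (erase_subset x s)) hαx⟩
  simp [hE] at this

lemma exists_pendant_of_removableVerts_eq_empty (hs : (G.induce s).Connected)
    (hE : removableVerts G s = ∅) (h : 1 < s.card) :
    ∃ v ∈ s, ∃ x ∈ s.erase v, componentIn G (s.erase v) x = {x} ∧
      indepNum (G.induce (s.erase v)) = indepNum (G.induce s) := by
  obtain ⟨t, hts, ht, htcard⟩ := exists_indepSet_card_eq_indepNum_induce G s
  have hcrit : ∀ y ∈ s, (G.induce (s.erase y)).Connected → y ∈ t := fun y hy hconn => by
    by_contra hyt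
    simpa [hE] using mem_removableVerts_of_notMem hy hconn hts ht htcard.ge hyt
  obtain ⟨v, hv, x, hx, hA⟩ := exists_pendant hs h fun a ha b hb ha' hb' hab =>
    ht (hcrit a ha ha') (hcrit b hb hb') (G.ne_of_adj hab) hab
  have hxt := hcrit x (mem_of_mem_erase hx)
    (connected_induce_erase_of_componentIn_erase_eq_singleton hs hv hx hA)
  have hα : indepNum (G.induce (s.erase v)) = indepNum (G.induce s) := by
    refine le_antisymm (indepNum_induce_mono (erase_subset v s))
      (htcard ▸ ht.card_le_indepNum_induce fun y hy => mem_erase.2 ⟨?_, hts hy⟩)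
    rintro rfl
    have hxy := adj_of_componentIn_erase_eq_singleton hs hv hx hA
    exact ht hxt hy (G.ne_of_adj hxy) hxy
  exact ⟨v, hv, x, hx, hA, hα⟩

lemma card_add_one_le_of_removableVerts_eq_empty (hs : (G.induce s).Connected)
    (hE : removableVerts G s = ∅)
    (ih : ∀ t ⊂ s, (G.induce t).Connected →
      t.card + 1 ≤ 2 * indepNum (G.induce t) + (removableVerts G t).card) :
    s.card + 1 ≤ 2 * indepNum (G.induce s) := by
  obtain ⟨⟨a, ha⟩⟩ := hs.nonempty
  have h1 := one_le_indepNum_induce (G := G) ha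
  rcases le_or_gt s.card 1 with h | h
  · omega
  obtain ⟨v, hv, x, hx, hA, hα⟩ := exists_pendant_of_removableVerts_eq_empty hs hE h
  obtain ⟨B₀, hB₀, hB₀x, hB₀E⟩ :=
    exists_mem_componentsIn_removableVerts_eq_empty hs hE hv hx hA hα
  set CC := componentsIn G (s.erase v)
  have hxCC : {x} ∈ CC := hA ▸ componentIn_mem_componentsIn hx
  have hEle : ∀ B ∈ CC, (removableVerts G B).card ≤ 1 := fun B hB => by
    obtain ⟨u, hu, huv⟩ := exists_adj_of_mem_componentsIn_erase hs hv hB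
    exact card_le_one.2 fun z hz z' hz' =>
      (eq_of_mem_removableVerts_of_adj hs hE hv hα hB hz hu huv).symm.trans
        (eq_of_mem_removableVerts_of_adj hs hE hv hα hB hz' hu huv)
  have hsumE : ∑ B ∈ CC, (removableVerts G B).card + 2 ≤ CC.card :=
    sum_add_two_le_card hEle hxCC hB₀ hB₀x (by simp [removableVerts_singleton])
      (by simp [hB₀E])
  have hIH : ∑ B ∈ CC, (B.card + 1) ≤
      ∑ B ∈ CC, (2 * indepNum (G.induce B) + (removableVerts G B).card) :=
    sum_le_sum fun B hB => ih B ((subset_of_mem_componentsIn hB).trans_ssubset (erase_ssubset hv))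
      (connected_induce_of_mem_componentsIn hB)
  rw [sum_add_distrib, sum_add_distrib, ← mul_sum, sum_const, smul_eq_mul, mul_one,
    ← card_eq_sum_card_componentsIn, ← indepNum_induce_eq_sum_componentsIn, hα] at hIH
  have := card_erase_add_one hv
  omega

theorem card_add_one_le_two_mul_indepNum_add_card_removableVerts (hs : (G.induce s).Connected) :
    s.card + 1 ≤ 2 * indepNum (G.induce s) + (removableVerts G s).card := by
  induction s using Finset.strongInduction with | H s ih => ?_
  obtain hE | ⟨z, hz⟩ := (removableVerts G s).eq_empty_or_nonempty
  · rw [hE, card_empty, add_zero]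
    exact card_add_one_le_of_removableVerts_eq_empty hs hE ih
  · obtain ⟨hzs, hconn, hα⟩ := mem_removableVerts.1 hz
    have h := ih _ (erase_ssubset hzs) hconn
    have hE := card_le_card (removableVerts_erase_subset hz)
    rw [card_erase_of_mem hz] at hE
    rw [card_erase_of_mem hzs, hα] at h
    have := card_pos.2 ⟨z, hz⟩
    have := card_pos.2 ⟨z, hzs⟩
    omega

end

/-- Every connected graph `G` has a connected induced subgraph `H` with
`α(H) = α(G)` and `|V(H)| ≤ 2α(G) − 1`. -/
theorem exists_small_connected_induced_subgraph {V : Type*} [Fintype V]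
    (G : SimpleGraph V) (hG : G.Connected) :
    ∃ U : Set V, (G.induce U).Connected ∧ indepNum (G.induce U) = indepNum G ∧
      U.ncard ≤ 2 * indepNum G - 1 := by
  classical
  have huniv : (G.induce (univ : Finset V)).Connected := by
    rw [coe_univ]
    exact (SimpleGraph.induceUnivIso G).connected_iff.2 hG
  obtain ⟨u, hu, hmin⟩ := (univ.powerset.filter fun u : Finset V =>
      (G.induce u).Connected ∧ indepNum (G.induce u) = indepNum G).exists_min_image card
    ⟨univ, mem_filter.2 ⟨mem_powerset_self _, huniv, indepNum_induce_univ⟩⟩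
  obtain ⟨-, hconn, hα⟩ := mem_filter.1 hu
  have hE : removableVerts G u = ∅ := eq_empty_of_forall_notMem fun z hz => by
    obtain ⟨hzu, hconn', hα'⟩ := mem_removableVerts.1 hz
    exact (card_erase_lt_of_mem hzu).not_ge <| hmin (u.erase z)
      (mem_filter.2 ⟨mem_powerset.2 (subset_univ _), hconn', hα'.trans hα⟩)
  have h := card_add_one_le_two_mul_indepNum_add_card_removableVerts hconn
  rw [hE, card_empty, add_zero, hα] at h
  exact ⟨u, hconn, hα, by rw [Set.ncard_coe_finset]; omega⟩
end

section
/- Let G be a connected simple graph and let H be a connected induced subgraph of G with α(H) = α(G) having the minimum number of vertices among all such subgraphs. Then for every spanning tree T of H, every pendant vertex (leaf) of T belongs to a maximum independent set of H, and consequently T has at most α(G) pendant vertices. -/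
lemma indepSet_iff_isIndepSet {V : Type*} (G : SimpleGraph V) (s : Set V) :
    IndepSet G s ↔ G.IsIndepSet s :=
  Iff.rfl

lemma indepNum_eq_indepNum {V : Type*} (G : SimpleGraph V) : indepNum G = G.indepNum := by
  simp only [indepNum, SimpleGraph.indepNum, SimpleGraph.isNIndepSet_iff, indepSet_iff_isIndepSet]

namespace SimpleGraph

variable {α β : Type*} {G : SimpleGraph α} {H : SimpleGraph β}

lemma IsIndepSet.image_embedding (f : G ↪g H) {s : Set α} (hs : G.IsIndepSet s) :
    H.IsIndepSet (f '' s) := by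
  rintro _ ⟨x, hx, rfl⟩ _ ⟨y, hy, rfl⟩ hxy hadj
  exact hs hx hy (fun h => hxy (h ▸ rfl)) (f.map_adj_iff.mp hadj)

lemma IsIndepSet.preimage_embedding (f : G ↪g H) {s : Set β} (hs : H.IsIndepSet s) :
    G.IsIndepSet (f ⁻¹' s) :=
  fun _ hx _ hy hxy hadj => hs hx hy (f.injective.ne hxy) (f.map_adj_iff.mpr hadj)

lemma indepNum_le_of_embedding [Finite β] (f : G ↪g H) : G.indepNum ≤ H.indepNum := by
  obtain ⟨s, hs⟩ := G.exists_isNIndepSet_indepNum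
  rw [← hs.card_eq, ← s.card_map f.toEmbedding]
  refine IsIndepSet.card_le_indepNum ?_
  rw [Finset.coe_map]
  exact hs.isIndepSet.image_embedding f

lemma IsIndepSet.card_le_indepNum_of_embedding [Finite α] (f : G ↪g H) {t : Finset β}
    (ht : H.IsIndepSet t) (hrange : ↑t ⊆ Set.range f) : t.card ≤ G.indepNum := by
  classical
  have hcard : (t.preimage f f.injective.injOn).card = t.card := by
    rw [Finset.card_preimage, Finset.filter_true_of_mem fun x hx => hrange hx]
  rw [← hcard]
  refine IsIndepSet.card_le_indepNum ?_
  rw [Finset.coe_preimage]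
  exact ht.preimage_embedding f

lemma indepNum_induce_eq_of_subset {U W : Set α} [Finite U] (hWU : W ⊆ U)
    {J : Finset U} (hJ : (G.induce U).IsNIndepSet (G.induce U).indepNum J)
    (hJW : ∀ x ∈ J, (x : α) ∈ W) : (G.induce W).indepNum = (G.induce U).indepNum := by
  have : Finite W := Finite.Set.subset U hWU
  let f := G.induceHomOfLE hWU
  refine le_antisymm (indepNum_le_of_embedding f) ?_
  rw [← hJ.card_eq]
  exact hJ.isIndepSet.card_le_indepNum_of_embedding f
    fun x hx => ⟨⟨x, hJW x hx⟩, rfl⟩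

lemma Connected.induce_compl_singleton_of_vdeg_eq_one {T : SimpleGraph α} (hT : T.Connected)
    {v : α} (hv : vdeg T v = 1) : (T.induce {v}ᶜ).Connected := by
  obtain ⟨u, hu⟩ := Set.ncard_eq_one.mp hv
  have huv : T.Adj v u := (Set.ext_iff.mp hu u).mpr rfl
  refine (connected_iff _).mpr ⟨hT.preconnected.induce_of_degree_eq_one ?_, ⟨⟨u, huv.ne'⟩⟩⟩
  intro w hw
  rw [Set.notMem_compl_iff, Set.mem_singleton_iff] at hw
  subst hw
  rw [hu]
  exact Set.subsingleton_singleton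

lemma Connected.induce_diff_singleton_of_le_induce {U : Set α} {T : SimpleGraph U}
    (hTle : T ≤ G.induce U) {v : U} (hT : (T.induce {v}ᶜ).Connected) :
    (G.induce (U \ {(v : α)})).Connected := by
  let f : T.induce {v}ᶜ →g G.induce (U \ {(v : α)}) :=
    { toFun := fun x => ⟨x.1.1, x.1.2, fun h => x.2 (Subtype.ext h)⟩
      map_rel' := fun h => hTle h }
  refine hT.map f ?_
  rintro ⟨y, hyU, hyv⟩
  exact ⟨⟨⟨y, hyU⟩, fun h => hyv (congrArg Subtype.val h)⟩, rfl⟩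

lemma mem_of_isNIndepSet_of_vdeg_eq_one [Finite α] {U : Set α}
    (hmin : ∀ W : Set α, (G.induce W).Connected →
      (G.induce W).indepNum = (G.induce U).indepNum → U.ncard ≤ W.ncard)
    {T : SimpleGraph U} (hTle : T ≤ G.induce U) (hT : T.Connected)
    {v : U} (hv : vdeg T v = 1)
    {J : Finset U} (hJ : (G.induce U).IsNIndepSet (G.induce U).indepNum J) : v ∈ J := by
  by_contra hvJ
  have hconn : (G.induce (U \ {(v : α)})).Connected :=
    (hT.induce_compl_singleton_of_vdeg_eq_one hv).induce_diff_singleton_of_le_induce hTle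
  have hα : (G.induce (U \ {(v : α)})).indepNum = (G.induce U).indepNum :=
    indepNum_induce_eq_of_subset Set.sdiff_subset hJ
      fun x hx => ⟨x.2, fun h => hvJ (Subtype.ext h ▸ hx)⟩
  have hlt : (U \ {(v : α)}).ncard < U.ncard := Set.ncard_sdiff_singleton_lt_of_mem v.2
  exact (hmin _ hconn hα).not_gt hlt

end SimpleGraph

theorem pendant_vertices_of_minimal_subgraph_general {V : Type*} [Fintype V]
    (G : SimpleGraph V) (U : Set V)
    (hα : indepNum (G.induce U) = indepNum G)
    (hmin : ∀ W : Set V, (G.induce W).Connected →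
      indepNum (G.induce W) = indepNum G → U.ncard ≤ W.ncard)
    (T : SimpleGraph U) (hTle : T ≤ G.induce U) (hT : T.IsTree) :
    (∀ v : U, vdeg T v = 1 →
      ∃ I : Finset U, IndepSet (G.induce U) ↑I ∧
        I.card = indepNum (G.induce U) ∧ v ∈ I) ∧
    {v : U | vdeg T v = 1}.ncard ≤ indepNum G := by
  simp only [indepNum_eq_indepNum, indepSet_iff_isIndepSet] at hα hmin ⊢
  have hleaf : ∀ v : U, vdeg T v = 1 →
      ∀ J, (G.induce U).IsNIndepSet (G.induce U).indepNum J → v ∈ J :=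
    fun v hv J hJ => SimpleGraph.mem_of_isNIndepSet_of_vdeg_eq_one
      (fun W hW hWα => hmin W hW (hWα.trans hα)) hTle hT.connected hv hJ
  obtain ⟨I, hI⟩ := (G.induce U).exists_isNIndepSet_indepNum
  refine ⟨fun v hv => ⟨I, hI.isIndepSet, hI.card_eq, hleaf v hv I hI⟩, ?_⟩
  calc {v : U | vdeg T v = 1}.ncard ≤ (I : Set U).ncard :=
        Set.ncard_le_ncard fun v hv => hleaf v hv I hI
    _ = G.indepNum := by rw [Set.ncard_coe_finset, hI.card_eq, hα]

/-- If `H = G.induce U` is a connected induced subgraph of `G` with `α(H) = α(G)`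
having the minimum number of vertices among all such subgraphs, then for every
spanning tree `T` of `H`, every pendant vertex of `T` belongs to a maximum
independent set of `H`, and `T` has at most `α(G)` pendant vertices. -/
theorem pendant_vertices_of_minimal_subgraph {V : Type*} [Fintype V]
    (G : SimpleGraph V) (hG : G.Connected) (U : Set V)
    (hU : (G.induce U).Connected) (hα : indepNum (G.induce U) = indepNum G)
    (hmin : ∀ W : Set V, (G.induce W).Connected →
      indepNum (G.induce W) = indepNum G → U.ncard ≤ W.ncard)
    (T : SimpleGraph U) (hTle : T ≤ G.induce U) (hT : T.IsTree) :
    (∀ v : U, vdeg T v = 1 →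
      ∃ I : Finset U, IndepSet (G.induce U) ↑I ∧
        I.card = indepNum (G.induce U) ∧ v ∈ I) ∧
    {v : U | vdeg T v = 1}.ncard ≤ indepNum G :=
  pendant_vertices_of_minimal_subgraph_general G U hα hmin T hTle hT
end

section
/- Let T be a tree with at least two vertices and at most p pendant vertices. If the maximum degree Δ(T) satisfies Δ(T) > (p+3)/2, then T has a unique vertex of degree Δ(T), and every other vertex of T has degree at most Δ(T) − 2. -/
/-- Let `T` be a tree with at least two vertices and at most `p` pendant vertices.
If `Δ(T) > (p+3)/2`, then `T` has a unique vertex of maximum degree and every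
other vertex has degree at most `Δ(T) − 2`. -/
theorem unique_max_degree_vertex {V : Type*} [Fintype V] (T : SimpleGraph V)
    (hT : T.IsTree) (hcard : 2 ≤ Fintype.card V) (p : ℕ)
    (hp : {v : V | vdeg T v = 1}.ncard ≤ p) (hΔ : p + 3 < 2 * maxDeg T) :
    ∃ v : V, vdeg T v = maxDeg T ∧ ∀ w : V, w ≠ v → vdeg T w ≤ maxDeg T - 2 := by
  classical
  have hvdeg : ∀ v : V, vdeg T v = T.degree v := fun v => by
    rw [vdeg, ← Nat.card_coe_set_eq, Nat.card_eq_fintype_card,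
      SimpleGraph.card_neighborSet_eq_degree]
  have hne : Nonempty V := Fintype.card_pos_iff.mp (by omega)
  -- every vertex has degree at least 1
  have hdeg1 : ∀ v : V, 1 ≤ T.degree v := by
    intro v
    obtain ⟨u, hu⟩ := Fintype.exists_ne_of_one_lt_card (by omega) v
    obtain ⟨q⟩ := hT.isConnected.preconnected v u
    cases q with
    | nil => exact absurd rfl hu.symm
    | cons h _ => exact (T.degree_pos_iff_exists_adj v).2 ⟨_, h⟩
  -- maximum degree is attained
  have hSne : {n | ∃ v, vdeg T v = n}.Nonempty := ⟨_, hne.some, rfl⟩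
  have hSbdd : BddAbove {n | ∃ v, vdeg T v = n} := by
    refine ⟨Fintype.card V, ?_⟩
    rintro n ⟨v, rfl⟩
    rw [hvdeg]
    exact (T.degree_le_maxDegree v).trans (T.maxDegree_le_of_forall_degree_le _
      (fun w => (T.degree_lt_card_verts w).le))
  obtain ⟨v, hv⟩ : ∃ v, vdeg T v = maxDeg T := Nat.sSup_mem hSne hSbdd
  have hle : ∀ w : V, vdeg T w ≤ maxDeg T := fun w => le_csSup hSbdd ⟨w, rfl⟩
  -- leaf set
  set L : Finset V := Finset.univ.filter (fun v => T.degree v = 1) with hL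
  have hLp : L.card ≤ p := by
    have hset : {v : V | vdeg T v = 1} = ↑L := by
      ext x; simp [hL, hvdeg]
    rwa [hset, Set.ncard_coe_finset] at hp
  -- degree sum
  have hsum : (∑ w : V, (T.degree w : ℤ)) = 2 * Fintype.card V - 2 := by
    have h1 := T.sum_degrees_eq_twice_card_edges
    have h2 := hT.card_edgeFinset
    have : (∑ w : V, (T.degree w : ℤ)) = ((∑ w : V, T.degree w : ℕ) : ℤ) := by
      push_cast; ring
    rw [this, h1]
    push_cast
    omega
  -- key identity: sum of (deg - 2) over non-leaves equals L.card - 2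
  have hsplit := Finset.sum_sdiff (f := fun w : V => (T.degree w : ℤ) - 2)
    (Finset.subset_univ L)
  have hLsum : (∑ w ∈ L, ((T.degree w : ℤ) - 2)) = -(L.card : ℤ) := by
    have h1 : ∀ w ∈ L, ((T.degree w : ℤ) - 2) = -1 := fun w hw => by
      rw [hL, Finset.mem_filter] at hw
      rw [hw.2]; norm_num
    rw [Finset.sum_congr rfl h1, Finset.sum_const, nsmul_eq_mul]; ring
  have htot : (∑ w : V, ((T.degree w : ℤ) - 2)) = -2 := by
    rw [Finset.sum_sub_distrib, hsum]
    simp [Finset.card_univ]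
    ring
  have hkey : (∑ w ∈ Finset.univ \ L, ((T.degree w : ℤ) - 2)) = (L.card : ℤ) - 2 := by
    have := hsplit
    rw [hLsum, htot] at this
    linarith
  have hnn : ∀ w ∈ Finset.univ \ L, (0 : ℤ) ≤ (T.degree w : ℤ) - 2 := by
    intro w hw
    rw [Finset.mem_sdiff, hL, Finset.mem_filter] at hw
    have h1 := hdeg1 w
    have h2 : T.degree w ≠ 1 := fun h => hw.2 ⟨Finset.mem_univ w, h⟩
    have h3 : 2 ≤ T.degree w := by omega
    have h4 : (2 : ℤ) ≤ (T.degree w : ℤ) := by exact_mod_cast h3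
    linarith
  -- main inequality: for distinct u w, deg u + deg w ≤ L.card + 2
  have main : ∀ u w : V, u ≠ w →
      (T.degree u : ℤ) + T.degree w ≤ (L.card : ℤ) + 2 := by
    intro u w huw
    by_cases hu : T.degree u = 1 <;> by_cases hw : T.degree w = 1
    · rw [hu, hw]
      have : (0 : ℤ) ≤ L.card := Int.natCast_nonneg _
      push_cast
      linarith
    · have hwmem : w ∈ Finset.univ \ L := by
        rw [Finset.mem_sdiff, hL, Finset.mem_filter]
        exact ⟨Finset.mem_univ w, fun h => hw h.2⟩
      have := Finset.single_le_sum hnn hwmem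
      rw [hkey] at this
      rw [hu]; push_cast; linarith
    · have humem : u ∈ Finset.univ \ L := by
        rw [Finset.mem_sdiff, hL, Finset.mem_filter]
        exact ⟨Finset.mem_univ u, fun h => hu h.2⟩
      have := Finset.single_le_sum hnn humem
      rw [hkey] at this
      rw [hw]; push_cast; linarith
    · have hsub : ({u, w} : Finset V) ⊆ Finset.univ \ L := by
        intro x hx
        rw [Finset.mem_insert, Finset.mem_singleton] at hx
        rw [Finset.mem_sdiff, hL, Finset.mem_filter]
        rcases hx with rfl | rfl
        · exact ⟨Finset.mem_univ x, fun h => hu h.2⟩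
        · exact ⟨Finset.mem_univ x, fun h => hw h.2⟩
      have h2 := Finset.sum_le_sum_of_subset_of_nonneg hsub
        (fun x hx _ => hnn x hx)
      rw [Finset.sum_pair huw, hkey] at h2
      linarith
  -- conclude
  refine ⟨v, hv, fun w hwv => ?_⟩
  have h1 := main w v hwv
  have h1' : T.degree w + T.degree v ≤ L.card + 2 := by exact_mod_cast h1
  have hvΔ : T.degree v = maxDeg T := by rw [← hvdeg]; exact hv
  rw [hvdeg]
  omega
end

section
/- Let H be a connected simple graph and let T be a spanning tree of H whose maximum degree Δ(T) is smallest among all spanning trees of H. If T has a unique vertex v of maximum degree and every other vertex of T has degree at most Δ(T) − 2, then the graph H − v has exactly Δ(T) connected components. -/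
/-! The components of `T - v` correspond to the neighbours of `v`, so there are `Δ(T)` of them.
If an edge `ab` of `H - v` joined two of them, with `a` in the component of the neighbour `x`,
then `T - vx + ab` would be a connected spanning subgraph of `H` in which `v` has lost one
degree and only `a`, `b` have gained one; since all other degrees are at most `Δ(T) - 2`, every
degree is at most `Δ(T) - 1`, and a spanning tree of it would beat `T`. So `H - v` has the same
components as `T - v`. -/

open SimpleGraph

namespace SimpleGraph

variable {V : Type*} {G : SimpleGraph V}

lemma Reachable.of_adj_reachable {G' : SimpleGraph V}
    (h : ∀ ⦃a b⦄, G'.Adj a b → G.Reachable a b) {a b : V} (hab : G'.Reachable a b) :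
    G.Reachable a b := by
  obtain ⟨p⟩ := hab
  induction p with
  | nil => rfl
  | cons hadj _ ih => exact (h hadj).trans ih

lemma ConnectedComponent.card_eq_of_le_of_adj_reachable {G' : SimpleGraph V} (hle : G ≤ G')
    (h : ∀ ⦃a b⦄, G'.Adj a b → G.Reachable a b) :
    Nat.card G'.ConnectedComponent = Nat.card G.ConnectedComponent := by
  refine (Nat.card_eq_of_bijective _ ⟨?_, surjective_map_ofLE hle⟩).symm
  intro c d
  induction c using ConnectedComponent.ind
  induction d using ConnectedComponent.ind
  simp only [map_mk, ConnectedComponent.eq]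
  exact Reachable.of_adj_reachable h

lemma Preconnected.exists_adj_reachable_induce_compl_singleton (hG : G.Preconnected) (v : V)
    (u : ({v}ᶜ : Set V)) :
    ∃ x : ({v}ᶜ : Set V), G.Adj v x ∧ (G.induce {v}ᶜ).Reachable x u := by
  obtain ⟨u, hu⟩ := u
  obtain ⟨p, hp⟩ := hG.exists_isPath v u
  cases p with
  | nil => exact absurd rfl hu
  | cons hvx q =>
    have hq : ∀ z ∈ q.support, z ∈ ({v}ᶜ : Set V) := fun z hz hzv =>
      ((Walk.cons_isPath_iff _ _).mp hp).2 (hzv ▸ hz)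
    exact ⟨_, hvx, (q.induce _ hq).reachable⟩

lemma IsAcyclic.eq_of_reachable_induce_compl_singleton (hG : G.IsAcyclic) {v : V}
    {x y : ({v}ᶜ : Set V)} (hx : G.Adj v x) (hy : G.Adj v y)
    (hxy : (G.induce {v}ᶜ).Reachable x y) : x = y := by
  by_contra hne
  obtain ⟨p, hp⟩ := hxy.exists_isPath
  have hv : v ∈ (p.map (Embedding.induce _).toHom).support :=
    hG.mem_support_of_ne_mem_support_of_adj_of_isPath (hp.map Subtype.val_injective)
      (Path.singleton hx.symm).2 hy.symm
      (by simp [Set.mem_compl_singleton_iff.mp y.2, (Subtype.coe_ne_coe.mpr hne).symm])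
  obtain ⟨z, -, hz⟩ := List.mem_map.mp (Walk.support_map _ p ▸ hv)
  exact z.2 hz

lemma IsTree.card_connectedComponent_induce_compl_singleton (hG : G.IsTree) (v : V) :
    Nat.card (G.induce {v}ᶜ).ConnectedComponent = (G.neighborSet v).ncard := by
  let f (x : G.neighborSet v) : (G.induce {v}ᶜ).ConnectedComponent :=
    (G.induce {v}ᶜ).connectedComponentMk ⟨x, x.2.ne'⟩
  have hf : f.Bijective := by
    refine ⟨fun x y hxy => ?_, fun c => c.ind fun u => ?_⟩
    · have := hG.isAcyclic.eq_of_reachable_induce_compl_singleton (x := ⟨x, x.2.ne'⟩)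
        (y := ⟨y, y.2.ne'⟩) x.2 y.2 (ConnectedComponent.exact hxy)
      exact Subtype.ext (Subtype.mk.inj this)
    · obtain ⟨x, hvx, hxu⟩ :=
        hG.connected.preconnected.exists_adj_reachable_induce_compl_singleton v u
      exact ⟨⟨x, hvx⟩, ConnectedComponent.sound hxu⟩
  rw [← Nat.card_eq_of_bijective f hf, Nat.card_coe_set_eq]

lemma Connected.reachable_deleteEdges_or (hG : G.Connected) (x y w : V) :
    (G.deleteEdges {s(x, y)}).Reachable w x ∨ (G.deleteEdges {s(x, y)}).Reachable w y := by
  classical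
  obtain ⟨P, hP⟩ := hG.exists_isPath w x
  by_cases heP : s(x, y) ∈ P.edges
  · have hyP := P.snd_mem_support_of_mem_edges heP
    have hxP₁ := Walk.endpoint_notMem_support_takeUntil hP hyP
      (G.ne_of_adj (P.adj_of_mem_edges heP))
    refine .inr ⟨(P.takeUntil y hyP).toDeleteEdges _ fun e he he' => hxP₁ ?_⟩
    rw [Set.mem_singleton_iff.mp he'] at he
    exact Walk.fst_mem_support_of_mem_edges _ he
  · exact .inl ⟨P.toDeleteEdges _ fun e he he' => heP (Set.mem_singleton_iff.mp he' ▸ he)⟩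

lemma Connected.connected_of_deleteEdges_le (hG : G.Connected) {x y : V} {G' : SimpleGraph V}
    (hle : G.deleteEdges {s(x, y)} ≤ G') (hxy : G'.Reachable x y) : G'.Connected := by
  refine (connected_iff_exists_forall_reachable G').2 ⟨x, fun w => ?_⟩
  rcases hG.reachable_deleteEdges_or x y w with hwx | hwy
  · exact (hwx.mono hle).symm
  · exact hxy.trans (hwy.mono hle).symm

lemma Reachable.deleteEdges_of_induce_compl_singleton {v : V} {a b : ({v}ᶜ : Set V)}
    (h : (G.induce {v}ᶜ).Reachable a b) (x : V) : (G.deleteEdges {s(v, x)}).Reachable a b :=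
  h.map
    { toFun := Subtype.val
      map_rel' := fun {p q} hpq => by
        simp only [deleteEdges_adj, Set.mem_singleton_iff, Sym2.eq_iff]
        exact ⟨hpq, by rintro (⟨hp, -⟩ | ⟨-, hq⟩); exacts [p.2 hp, q.2 hq]⟩ }

lemma neighborSet_deleteEdges_singleton (v x : V) :
    (G.deleteEdges {s(v, x)}).neighborSet v = G.neighborSet v \ {x} := by
  ext w
  simp only [mem_neighborSet, deleteEdges_adj, Set.mem_singleton_iff, Sym2.eq_iff, Set.mem_sdiff]
  grind [G.ne_of_adj]

lemma neighborSet_sup_edge_of_ne {a b u : V} (ha : u ≠ a) (hb : u ≠ b) :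
    (G ⊔ edge a b).neighborSet u = G.neighborSet u := by
  ext w
  simp [edge_adj, ha, hb]

lemma ncard_neighborSet_sup_edge_le [Finite V] (a b u : V) :
    ((G ⊔ edge a b).neighborSet u).ncard ≤ (G.neighborSet u).ncard + 1 := by
  classical
  have : (edge a b).neighborSet u ⊆ {if u = a then b else a} := by
    intro w hw
    simp only [mem_neighborSet, edge_adj] at hw
    grind
  calc ((G ⊔ edge a b).neighborSet u).ncard
      ≤ (G.neighborSet u).ncard + ((edge a b).neighborSet u).ncard := by
        rw [neighborSet_sup]; exact Set.ncard_union_le _ _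
    _ ≤ (G.neighborSet u).ncard + 1 := by
        grw [Set.ncard_le_ncard this, Set.ncard_singleton]

end SimpleGraph

lemma vdeg_le_maxDeg {V : Type*} [Finite V] (G : SimpleGraph V) (u : V) : vdeg G u ≤ maxDeg G :=
  le_csSup ⟨Nat.card V, by rintro _ ⟨w, rfl⟩; exact Set.ncard_le_card _⟩ ⟨u, rfl⟩

lemma maxDeg_le {V : Type*} [Nonempty V] {G : SimpleGraph V} {d : ℕ} (h : ∀ u, vdeg G u ≤ d) :
    maxDeg G ≤ d :=
  csSup_le ⟨_, Classical.arbitrary V, rfl⟩ (by rintro _ ⟨u, rfl⟩; exact h u)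

lemma vdeg_mono {V : Type*} [Finite V] {G G' : SimpleGraph V} (h : G ≤ G') (u : V) :
    vdeg G u ≤ vdeg G' u :=
  Set.ncard_le_ncard (neighborSet_mono h u)

lemma vdeg_deleteEdges_sup_edge_le {V : Type*} [Finite V] {T : SimpleGraph V} {v x a b : V}
    (hva : v ≠ a) (hvb : v ≠ b) (hvx : T.Adj v x) {d : ℕ} (hv : vdeg T v ≤ d + 1)
    (hw : ∀ w, w ≠ v → vdeg T w + 1 ≤ d) (u : V) :
    vdeg (T.deleteEdges {s(v, x)} ⊔ edge a b) u ≤ d := by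
  rcases eq_or_ne u v with rfl | hu
  · have : vdeg (T.deleteEdges {s(u, x)} ⊔ edge a b) u = vdeg T u - 1 := by
      rw [vdeg, neighborSet_sup_edge_of_ne hva hvb, neighborSet_deleteEdges_singleton,
        Set.ncard_sdiff_singleton_of_mem (s := T.neighborSet u) hvx, vdeg]
    omega
  · calc vdeg (T.deleteEdges {s(v, x)} ⊔ edge a b) u
        ≤ vdeg (T.deleteEdges {s(v, x)}) u + 1 := ncard_neighborSet_sup_edge_le a b u
      _ ≤ vdeg T u + 1 := by grw [vdeg_mono (T.deleteEdges_le _)]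
      _ ≤ d := hw u hu

theorem SimpleGraph.IsTree.reachable_induce_compl_singleton_of_adj {V : Type*} [Finite V]
    {H T : SimpleGraph V} (hT : T.IsTree) (hTH : T ≤ H)
    (hmin : ∀ T' : SimpleGraph V, T' ≤ H → T'.IsTree → maxDeg T ≤ maxDeg T') {v : V}
    (hdeg : ∀ w, w ≠ v → vdeg T w ≤ maxDeg T - 2) {a b : ({v}ᶜ : Set V)}
    (hab : H.Adj a b) : (T.induce {v}ᶜ).Reachable a b := by
  classical
  by_contra hnr
  have hconn := hT.connected
  obtain ⟨x, hvx, hxa⟩ := hconn.preconnected.exists_adj_reachable_induce_compl_singleton v a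
  obtain ⟨y, hvy, hyb⟩ := hconn.preconnected.exists_adj_reachable_induce_compl_singleton v b
  have hxy : (x : V) ≠ y := fun h => hnr (hxa.symm.trans (Subtype.ext h ▸ hyb))
  set T' := T.deleteEdges {s(v, x)} ⊔ edge a b
  have hT'H : T' ≤ H :=
    sup_le ((T.deleteEdges_le _).trans hTH) (edge_le_iff (G := H) |>.mpr (.inr hab))
  have hvy' : T'.Adj v y := .inl (by simp [deleteEdges_adj, hvy, hvy.ne', hxy.symm])
  have hba : T'.Adj b a := .inr (by simp [edge_adj, hab.ne.symm])
  -- `T'` still joins `v` to `x`, along `v - y ⇝ b - a ⇝ x`.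
  have hT' : T'.Connected := hconn.connected_of_deleteEdges_le le_sup_left <|
    hvy'.reachable.trans <|
      ((hyb.deleteEdges_of_induce_compl_singleton x).mono le_sup_left).trans <|
      hba.reachable.trans ((hxa.symm.deleteEdges_of_induce_compl_singleton x).mono le_sup_left)
  have hvdeg : 2 ≤ vdeg T v := by
    rw [← Set.ncard_pair hxy]
    exact Set.ncard_le_ncard (Set.pair_subset hvx hvy)
  have hΔ := vdeg_le_maxDeg T v
  have : Nonempty V := ⟨v⟩
  obtain ⟨T₀, hT₀T', hT₀⟩ := hT'.exists_isTree_le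
  have hT₀deg : maxDeg T₀ ≤ maxDeg T - 1 := maxDeg_le fun u => (vdeg_mono hT₀T' u).trans <|
    vdeg_deleteEdges_sup_edge_le (fun h => a.2 h.symm) (fun h => b.2 h.symm) hvx (by omega)
      (fun w hw => by have := hdeg w hw; omega) u
  have := hmin T₀ (hT₀T'.trans hT'H) hT₀
  omega

theorem components_of_delete_max_degree_vertex_general {V : Type*} [Fintype V]
    (H : SimpleGraph V) (T : SimpleGraph V)
    (hTle : T ≤ H) (hT : T.IsTree)
    (hmin : ∀ T' : SimpleGraph V, T' ≤ H → T'.IsTree → maxDeg T ≤ maxDeg T')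
    (v : V) (hv : vdeg T v = maxDeg T)
    (huniq : ∀ w : V, w ≠ v → vdeg T w ≤ maxDeg T - 2) :
    Nat.card ((H.induce ({v}ᶜ : Set V)).ConnectedComponent) = maxDeg T := by
  rw [ConnectedComponent.card_eq_of_le_of_adj_reachable (comap_monotone _ hTle)
      fun a b hab => hT.reachable_induce_compl_singleton_of_adj hTle hmin huniq hab,
    hT.card_connectedComponent_induce_compl_singleton, ← hv, vdeg]

/-- Let `T` be a spanning tree of a connected graph `H` whose maximum degree is
smallest among all spanning trees. If `T` has a unique vertex `v` of maximum
degree and every other vertex has degree at most `Δ(T) − 2`, then `H − v` has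
exactly `Δ(T)` connected components. -/
theorem components_of_delete_max_degree_vertex {V : Type*} [Fintype V]
    (H : SimpleGraph V) (hH : H.Connected) (T : SimpleGraph V)
    (hTle : T ≤ H) (hT : T.IsTree)
    (hmin : ∀ T' : SimpleGraph V, T' ≤ H → T'.IsTree → maxDeg T ≤ maxDeg T')
    (v : V) (hv : vdeg T v = maxDeg T)
    (huniq : ∀ w : V, w ≠ v → vdeg T w ≤ maxDeg T - 2) :
    Nat.card ((H.induce ({v}ᶜ : Set V)).ConnectedComponent) = maxDeg T :=
  components_of_delete_max_degree_vertex_general H T hTle hT hmin v hv huniq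
end
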